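/- arXiv:2403.07552 — 6 statements merged into one kernel-verified Lean document; each statement's English description precedes it below -/
import Mathlib

section
/- Let f_i and f_j be monic Eisenstein polynomials over a discrete valuation ring O with uniformizer t (i.e., all non-leading coefficients have t-order at least 1 and the constant terms have t-order exactly 1), of degrees e_i and e_j respectively, with no common roots. Then the t-adic valuation of the resultant res(f_i, f_j) = det f_i(R(f_j)) (where R(f_j) is the companion matrix of f_j) is at least min(e_i, e_j). -/
/-!
Adjoin `π = t ^ (1 / e)`, where `e = deg fj`; concretely, `PowerSeries.expand e` embeds `k⟦t⟧` into
`k⟦π⟧` via `t ↦ π ^ e`. Since `fj` is Eisenstein of degree `e`, its lower coefficients are divisible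
by `π ^ e`, and conjugating `R(fj)` by `D = diag(1, π, …, π ^ (e - 1))` yields `π` times an integral
matrix. The lower coefficients of `fi` are divisible by `t = π ^ e`, so the conjugate of `fi(R(fj))`
is divisible by `π ^ min(deg fi, e)`. Taking determinants, `π ^ (e * min(deg fi, e))` divides the
resultant in `k⟦π⟧`, i.e. `t ^ min(deg fi, e)` divides it in `k⟦t⟧`.
-/

noncomputable def companionMatrix {R : Type*} [CommRing R] (n : ℕ) (p : Polynomial R) :
    Matrix (Fin n) (Fin n) R :=
  Matrix.of fun i j =>
    (if (i : ℕ) = (j : ℕ) + 1 then 1 else 0) + (if (j : ℕ) = n - 1 then -p.coeff i else 0)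

open Polynomial

namespace Matrix

variable {n S : Type*} [Fintype n] [DecidableEq n] [CommRing S]

/-- For invertible `D` this says `D * A * D⁻¹ ∈ π ^ s • Mₙ(S)`. -/
def ConjDvd (D : Matrix n n S) (π : S) (s : ℕ) (A : Matrix n n S) : Prop :=
  ∃ B, D * A = π ^ s • (B * D)

namespace ConjDvd

variable {D A A' : Matrix n n S} {π : S} {s t : ℕ}

lemma one : ConjDvd D π 0 1 := ⟨1, by simp⟩

lemma zero : ConjDvd D π s 0 := ⟨0, by simp⟩

lemma mono (h : ConjDvd D π s A) (hts : t ≤ s) : ConjDvd D π t A := by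
  obtain ⟨B, hB⟩ := h
  refine ⟨π ^ (s - t) • B, ?_⟩
  rw [hB, smul_mul_assoc, smul_smul, ← pow_add, Nat.add_sub_cancel' hts]

lemma add (h : ConjDvd D π s A) (h' : ConjDvd D π s A') : ConjDvd D π s (A + A') := by
  obtain ⟨B, hB⟩ := h
  obtain ⟨B', hB'⟩ := h'
  exact ⟨B + B', by rw [Matrix.mul_add, hB, hB', add_mul, smul_add]⟩

lemma sum {ι : Type*} {u : Finset ι} {A : ι → Matrix n n S}
    (h : ∀ i ∈ u, ConjDvd D π s (A i)) : ConjDvd D π s (∑ i ∈ u, A i) :=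
  Finset.sum_induction _ _ (fun _ _ => add) zero h

lemma mul (h : ConjDvd D π s A) (h' : ConjDvd D π t A') : ConjDvd D π (s + t) (A * A') := by
  obtain ⟨B, hB⟩ := h
  obtain ⟨B', hB'⟩ := h'
  refine ⟨B * B', ?_⟩
  rw [← Matrix.mul_assoc, hB, smul_mul_assoc, Matrix.mul_assoc, hB', mul_smul_comm, smul_smul,
    ← pow_add, Matrix.mul_assoc]

lemma pow (h : ConjDvd D π s A) (m : ℕ) : ConjDvd D π (m * s) (A ^ m) := by
  induction m with
  | zero => simpa using one
  | succ m ih => simpa [pow_succ, Nat.succ_mul] using ih.mul h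

lemma smul (h : ConjDvd D π s A) {c : S} (hc : π ^ t ∣ c) : ConjDvd D π (t + s) (c • A) := by
  obtain ⟨B, hB⟩ := h
  obtain ⟨c, rfl⟩ := hc
  refine ⟨c • B, ?_⟩
  rw [mul_smul_comm, hB, smul_smul, smul_mul_assoc, smul_smul, pow_add, mul_right_comm]

lemma aeval (h : ConjDvd D π 1 A) {p : S[X]} {d : ℕ} (hd : p.natDegree ≤ d)
    (hp : ∀ i < d, π ^ t ∣ p.coeff i) : ConjDvd D π (min d t) (aeval A p) := by
  rw [aeval_eq_sum_range]
  refine sum fun i hi => ?_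
  rcases (Nat.lt_succ_iff.mp (Finset.mem_range.mp hi)).trans hd |>.lt_or_eq with hi | rfl
  · exact ((h.pow i).smul (hp i hi)).mono ((min_le_right _ _).trans (Nat.le_add_right _ _))
  · exact ((h.pow _).smul (t := 0) (by simp)).mono (by simp)

lemma pow_dvd_det (h : ConjDvd D π s A) (hD : IsRightRegular D.det) :
    π ^ (Fintype.card n * s) ∣ A.det := by
  obtain ⟨B, hB⟩ := h
  have hdet : A.det * D.det = π ^ (Fintype.card n * s) * B.det * D.det := by
    rw [mul_comm, ← det_mul, hB, det_smul, det_mul, pow_mul', mul_assoc]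
  exact ⟨B.det, hD hdet⟩

end ConjDvd

end Matrix

section Companion

variable {R S : Type*} [CommRing R] [CommRing S]

lemma companionMatrix_map (f : R →+* S) (n : ℕ) (p : R[X]) :
    (companionMatrix n p).map f = companionMatrix n (p.map f) := by
  ext i j
  simp [companionMatrix, apply_ite f]

lemma companionMatrix_conjDvd {π : S} {n : ℕ} {p : S[X]} (hp : ∀ i < n, π ^ n ∣ p.coeff i) :
    Matrix.ConjDvd (Matrix.diagonal fun i : Fin n => π ^ (i : ℕ)) π 1 (companionMatrix n p) := by
  choose u hu using fun i : Fin n => hp i i.isLt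
  -- the companion matrix of `π⁻ⁿ p(π x)`
  refine ⟨Matrix.of fun i j => (if (i : ℕ) = j + 1 then 1 else 0) +
    (if (j : ℕ) = n - 1 then -(π ^ (i : ℕ) * u i) else 0), ?_⟩
  ext i j
  have hj := j.isLt
  simp only [Matrix.diagonal_mul, Matrix.mul_diagonal, Matrix.smul_apply, Matrix.of_apply,
    companionMatrix, hu, smul_eq_mul, pow_one]
  split_ifs with h₁ h₂ h₂
  · omega
  · rw [h₁]
    ring
  · have hn : π ^ n = π * π ^ (j : ℕ) := by rw [← pow_succ', show (j : ℕ) + 1 = n by omega]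
    rw [hn]
    ring
  · simp

end Companion

namespace PowerSeries

variable {k : Type*} [CommRing k]

lemma X_pow_dvd_iff_le_order {n : ℕ} {φ : k⟦X⟧} : X ^ n ∣ φ ↔ (n : ℕ∞) ≤ φ.order := by
  rw [X_pow_dvd_iff]
  exact ⟨nat_le_order φ n, fun h m hm => coeff_of_lt_order m ((Nat.cast_lt.2 hm).trans_le h)⟩

lemma X_pow_dvd_expand_of_X_dvd {p : ℕ} (hp : p ≠ 0) {φ : k⟦X⟧} (h : X ∣ φ) :
    X ^ p ∣ expand p hp φ := by
  obtain ⟨ψ, rfl⟩ := h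
  simp

lemma X_pow_dvd_of_X_pow_mul_dvd_expand {p m : ℕ} (hp : p ≠ 0) {φ : k⟦X⟧}
    (h : X ^ (p * m) ∣ expand p hp φ) : X ^ m ∣ φ := by
  rw [X_pow_dvd_iff_le_order, order_expand, nsmul_eq_mul, Nat.cast_mul] at h
  rw [X_pow_dvd_iff_le_order]
  exact (ENat.mul_le_mul_left_iff (by exact_mod_cast hp) (ENat.natCast_ne_top p)).1 h

end PowerSeries

lemma Matrix.map_aeval {n R S : Type*} [Fintype n] [DecidableEq n] [CommRing R] [CommRing S]
    (f : R →+* S) (A : Matrix n n R) (p : R[X]) :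
    (aeval A p).map f = aeval (A.map f) (p.map f) :=
  map_aeval_eq_aeval_map (ψ := f.mapMatrix) (by
    ext x i j
    by_cases h : i = j <;> simp [Matrix.algebraMap_matrix_apply, h]) p A

theorem stmt0_general {k : Type*} [Field k] (fi fj : Polynomial (PowerSeries k))
    (hfi : fi.IsEisensteinAt (Ideal.span {(PowerSeries.X : PowerSeries k)}))
    (hfj : fj.IsEisensteinAt (Ideal.span {(PowerSeries.X : PowerSeries k)})) :
    (PowerSeries.X : PowerSeries k) ^ (min fi.natDegree fj.natDegree) ∣
      ((Polynomial.aeval (companionMatrix fj.natDegree fj)) fi).det := by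
  set e := fj.natDegree
  rcases Nat.eq_zero_or_pos e with he | he
  · simp [he]
  let E : PowerSeries k →+* PowerSeries k := (PowerSeries.expand e he.ne').toRingHom
  have hX_dvd {f : (PowerSeries k)[X]} (hf : f.IsEisensteinAt (Ideal.span {PowerSeries.X})) {i : ℕ}
      (hi : i < f.natDegree) : PowerSeries.X ^ e ∣ (f.map E).coeff i := by
    rw [coeff_map]
    exact PowerSeries.X_pow_dvd_expand_of_X_dvd _ (Ideal.mem_span_singleton.1 (hf.mem hi))
  have hC : Matrix.ConjDvd (Matrix.diagonal fun i : Fin e => PowerSeries.X ^ (i : ℕ)) PowerSeries.X 1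
      ((companionMatrix e fj).map E) := by
    rw [companionMatrix_map]
    exact companionMatrix_conjDvd fun _ => hX_dvd hfj
  have hM := hC.aeval natDegree_map_le fun _ => hX_dvd hfi
  rw [← Matrix.map_aeval] at hM
  have hdet := hM.pow_dvd_det ?_
  · rw [Fintype.card_fin, ← RingHom.mapMatrix_apply, ← RingHom.map_det] at hdet
    exact PowerSeries.X_pow_dvd_of_X_pow_mul_dvd_expand he.ne' hdet
  · rw [Matrix.det_diagonal]
    exact (IsRegular.of_ne_zero <| Finset.prod_ne_zero_iff.2 fun _ _ =>
      pow_ne_zero _ PowerSeries.X_ne_zero).right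

/-- For monic Eisenstein polynomials `fi, fj` over `O = k⟦t⟧` (all non-leading
coefficients of positive `t`-order, constant term of `t`-order exactly 1) with no common
roots (i.e. coprime over the field of Laurent series), the `t`-adic valuation of the
resultant `res(fi, fj) = det fi(R(fj))` is at least `min (deg fi) (deg fj)`. -/
theorem stmt0 {k : Type*} [Field k] (fi fj : Polynomial (PowerSeries k))
    (hfi_monic : fi.Monic) (hfj_monic : fj.Monic)
    (hfi : fi.IsEisensteinAt (Ideal.span {(PowerSeries.X : PowerSeries k)}))
    (hfj : fj.IsEisensteinAt (Ideal.span {(PowerSeries.X : PowerSeries k)}))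
    (hcoprime : IsCoprime
      (fi.map (algebraMap (PowerSeries k) (LaurentSeries k)))
      (fj.map (algebraMap (PowerSeries k) (LaurentSeries k)))) :
    (PowerSeries.X : PowerSeries k) ^ (min fi.natDegree fj.natDegree) ∣
      ((Polynomial.aeval (companionMatrix fj.natDegree fj)) fi).det :=
  stmt0_general fi fj hfi hfj
end

section
/- Let V be a finite-dimensional vector space, Φ an invertible linear operator on V, and U a nonzero subspace containing no nonzero Φ-invariant subspace, with a subspace Z ⊇ U such that dim Z − dim U = 1 and Φ(U) ⊆ Z. Then for every j with the intersection ∩_{i=0}^{j} Φ^i(U) nonzero, we have dim(∩_{i=0}^{j} Φ^i(U)) − dim(∩_{i=0}^{j+1} Φ^i(U)) = 1. -/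
/-- With `V` finite-dimensional, `Φ` invertible, `0 ≠ U ⊆ Z ⊆ V`,
`dim Z = dim U + 1`, `Φ(U) ⊆ Z`, and `U` containing no nonzero `Φ`-invariant subspace:
for every `j` with `⋂_{i=0}^{j} Φ^i(U) ≠ 0`, the dimension drops by exactly one when
passing to `⋂_{i=0}^{j+1} Φ^i(U)`. -/
theorem stmt5 {K V : Type*} [Field K] [AddCommGroup V] [Module K V]
    [FiniteDimensional K V]
    (Φ : V ≃ₗ[K] V) (U Z : Submodule K V) (hUZ : U ≤ Z) (hU : U ≠ ⊥)
    (hdim : Module.finrank K Z = Module.finrank K U + 1)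
    (hmap : U.map Φ.toLinearMap ≤ Z)
    (hinv : ∀ W : Submodule K V, W ≤ U → W.map Φ.toLinearMap ≤ W → W = ⊥)
    (j : ℕ)
    (hne : (⨅ i ∈ Finset.range (j + 1), U.map (Φ ^ i).toLinearMap) ≠ ⊥) :
    Module.finrank K
        (⨅ i ∈ Finset.range (j + 1), U.map (Φ ^ i).toLinearMap : Submodule K V)
      = Module.finrank K
          (⨅ i ∈ Finset.range (j + 2), U.map (Φ ^ i).toLinearMap : Submodule K V) + 1 := by
  classical
  set A : Submodule K V := ⨅ i ∈ Finset.range (j + 1), U.map (Φ ^ i).toLinearMap with hA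
  set B : Submodule K V := ⨅ i ∈ Finset.range (j + 2), U.map (Φ ^ i).toLinearMap with hB
  have hstep : ∀ i : ℕ, U.map ((Φ ^ (i+1)).toLinearMap)
      = (U.map (Φ ^ i).toLinearMap).map Φ.toLinearMap := by
    intro i
    rw [← Submodule.map_comp]
    congr 1
    ext x
    simp [pow_succ']
  have hmemA : ∀ x : V, x ∈ A ↔ ∀ i, i < j + 1 → x ∈ U.map (Φ ^ i).toLinearMap := by
    intro x; simp [hA, Submodule.mem_iInf]
  have hmemB : ∀ x : V, x ∈ B ↔ ∀ i, i < j + 2 → x ∈ U.map (Φ ^ i).toLinearMap := by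
    intro x; simp [hB, Submodule.mem_iInf]
  have key : B = U ⊓ A.map Φ.toLinearMap := by
    ext x
    rw [hmemB x, Submodule.mem_inf, Submodule.mem_map_equiv, hmemA (Φ.symm x)]
    constructor
    · intro h
      refine ⟨by simpa using h 0 (by omega), fun i hi => ?_⟩
      have := h (i+1) (by omega)
      rw [hstep i, Submodule.mem_map_equiv] at this
      exact this
    · rintro ⟨h0, h1⟩ i hi
      match i with
      | 0 => simpa using h0
      | Nat.succ i =>
        rw [hstep i, Submodule.mem_map_equiv]
        exact h1 i (by omega)
  have hAle : A ≤ U := by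
    have h0 : A ≤ U.map ((Φ ^ 0).toLinearMap) := by
      rw [hA]; exact biInf_le _ (Finset.mem_range.mpr (by omega))
    simpa using h0
  have hBleA : B ≤ A := by
    rw [hA, hB]
    refine le_iInf₂ fun i hi => ?_
    exact biInf_le _ (Finset.mem_range.mpr (by have := Finset.mem_range.mp hi; omega))
  have hAmapZ : A.map Φ.toLinearMap ≤ Z := (Submodule.map_mono hAle).trans hmap
  have hfr_map : Module.finrank K (A.map Φ.toLinearMap) = Module.finrank K A :=
    LinearEquiv.finrank_map_eq Φ A
  have hsup : Module.finrank K (U ⊔ A.map Φ.toLinearMap : Submodule K V)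
      ≤ Module.finrank K U + 1 := by
    rw [← hdim]; exact Submodule.finrank_mono (sup_le hUZ hAmapZ)
  have hinfsup := Submodule.finrank_sup_add_finrank_inf_eq U (A.map Φ.toLinearMap)
  have hBinf : Module.finrank K B = Module.finrank K (U ⊓ A.map Φ.toLinearMap : Submodule K V) := by
    rw [key]
  have hub : Module.finrank K A ≤ Module.finrank K B + 1 := by omega
  have hlt : Module.finrank K B < Module.finrank K A := by
    rcases lt_or_eq_of_le (Submodule.finrank_mono hBleA) with h | h
    · exact h
    · exfalso
      have hBA : B = A := Submodule.eq_of_le_of_finrank_le hBleA (le_of_eq h.symm)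
      have hAsub : A ≤ A.map Φ.toLinearMap := by
        have h2 := key.symm.trans hBA
        exact h2.ge.trans inf_le_right
      have hmapA : A.map Φ.toLinearMap = A :=
        (Submodule.eq_of_le_of_finrank_le hAsub (le_of_eq hfr_map)).symm
      exact hne (hinv A hAle (le_of_eq hmapA))
  omega
end

section
/- Let d = [d_1, ..., d_r] be a partition, and let its dual (transpose) partition d^t be defined by (d^t)_i = #{j : d_j ≥ i}. A partition of type B (an element of P_1(2n+1), where even parts occur with even multiplicity) is special if and only if its dual partition also lies in P_1(2n+1); dually, a partition of type C in P_{-1}(2n) is special if and only if its dual partition also lies in P_{-1}(2n). For a partition d let d^+ be obtained by adding 1 to the largest part, for a partition f let f^- be obtained by subtracting 1 from the smallest positive part, and let (·)_B and (·)_C denote the largest type-B and type-C partition, respectively, dominated by the given partition. Then the map d ↦ (d^+)_B is a bijection from the set of special type-C partitions of 2n to the set of special type-B partitions of 2n+1, with inverse f ↦ (f^-)_C. -/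
/-- A partition of `N`, encoded as a weakly decreasing function `ℕ → ℕ` (0-indexed parts)
that is eventually zero and whose parts sum to `N`. -/
def IsPartitionFun (d : ℕ → ℕ) (N : ℕ) : Prop :=
  Antitone d ∧ ∃ m, (∀ i, m ≤ i → d i = 0) ∧ ∑ i ∈ Finset.range m, d i = N

/-- Multiplicity of the part `i` in the partition `d`. -/
noncomputable def partMult (d : ℕ → ℕ) (i : ℕ) : ℕ := Set.ncard {j | d j = i}

/-- Type B partition of `N` (`N = 2n+1`): every even part occurs with even multiplicity. -/
def IsTypeB (d : ℕ → ℕ) (N : ℕ) : Prop :=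
  IsPartitionFun d N ∧ ∀ i, 0 < i → Even i → Even (partMult d i)

/-- Type C partition of `N` (`N = 2n`): every odd part occurs with even multiplicity. -/
def IsTypeC (d : ℕ → ℕ) (N : ℕ) : Prop :=
  IsPartitionFun d N ∧ ∀ i, 0 < i → Odd i → Even (partMult d i)

/-- The transpose (dual) partition: `(d^t)_i = #{j : d_j ≥ i}` (0-indexed). -/
noncomputable def ptranspose (d : ℕ → ℕ) : ℕ → ℕ := fun i => Set.ncard {j | i + 1 ≤ d j}

/-- A partition is special (type B) if its transpose is again of type B. -/
def IsSpecialB (d : ℕ → ℕ) (N : ℕ) : Prop := IsTypeB d N ∧ IsTypeB (ptranspose d) N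

/-- A partition is special (type C) if its transpose is again of type C. -/
def IsSpecialC (d : ℕ → ℕ) (N : ℕ) : Prop := IsTypeC d N ∧ IsTypeC (ptranspose d) N

/-- Dominance order: every partial sum of `f` is at most that of `d`. -/
def Dominates (d f : ℕ → ℕ) : Prop :=
  ∀ k, ∑ i ∈ Finset.range k, f i ≤ ∑ i ∈ Finset.range k, d i

/-- `d⁺`: add 1 to the largest part. -/
def dplus (d : ℕ → ℕ) : ℕ → ℕ := fun i => if i = 0 then d 0 + 1 else d i

/-- `d⁻`: subtract 1 from the smallest positive part (the last positive part). -/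
def dminus (d : ℕ → ℕ) : ℕ → ℕ :=
  fun i => if 0 < d i ∧ d (i + 1) = 0 then d i - 1 else d i

/-- `(e)_B`: the largest type B partition of `N` dominated by `e`. -/
def IsBCollapse (e b : ℕ → ℕ) (N : ℕ) : Prop :=
  IsTypeB b N ∧ Dominates e b ∧ ∀ b', IsTypeB b' N → Dominates e b' → Dominates b b'

/-- `(e)_C`: the largest type C partition of `N` dominated by `e`. -/
def IsCCollapse (e c : ℕ → ℕ) (N : ℕ) : Prop :=
  IsTypeC c N ∧ Dominates e c ∧ ∀ c', IsTypeC c' N → Dominates e c' → Dominates c c'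
namespace Stmt7Aux

open Finset

/-- Partial sums. -/
def S (p : ℕ → ℕ) (k : ℕ) : ℕ := ∑ i ∈ Finset.range k, p i

lemma S_succ (p : ℕ → ℕ) (k : ℕ) : S p (k + 1) = S p k + p k :=
  Finset.sum_range_succ _ _

lemma S_zero (p : ℕ → ℕ) : S p 0 = 0 := rfl

lemma S_mono (p : ℕ → ℕ) : Monotone (S p) := by
  intro a b hab
  exact Finset.sum_le_sum_of_subset (Finset.range_subset_range.2 hab)

lemma dominates_iff (d f : ℕ → ℕ) : Dominates d f ↔ ∀ k, S f k ≤ S d k := Iff.rfl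

lemma eq_of_S_eq {p q : ℕ → ℕ} (h : ∀ k, S p k = S q k) : p = q := by
  funext k
  have h1 := h (k + 1)
  have h2 := h k
  rw [S_succ, S_succ] at h1
  omega

/-- partial sums are constant once a zero part is reached (for antitone p). -/
lemma S_const_of_zero {p : ℕ → ℕ} (hp : Antitone p) {i : ℕ} (h : p i = 0) :
    ∀ k, i ≤ k → S p k = S p i := by
  intro k hk
  induction k with
  | zero => have : i = 0 := by omega
            rw [this]
  | succ k ih =>
    rcases Nat.eq_or_lt_of_le hk with h' | h'
    · rw [h']
    · have hik : i ≤ k := by omega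
      have hz : p k = 0 := le_antisymm (h ▸ hp hik) (Nat.zero_le _)
      rw [S_succ, hz, ih hik]
      omega

lemma S_eq_N {p : ℕ → ℕ} {N : ℕ} (hp : IsPartitionFun p N) :
    ∃ m, ∀ k, m ≤ k → S p k = N := by
  obtain ⟨ha, m, hz, hs⟩ := hp
  refine ⟨m, fun k hk => ?_⟩
  have h0 : p m = 0 := hz m le_rfl
  rw [S_const_of_zero ha h0 k hk]; exact hs

lemma S_le_N {p : ℕ → ℕ} {N : ℕ} (hp : IsPartitionFun p N) (k : ℕ) : S p k ≤ N := by
  obtain ⟨m, hm⟩ := S_eq_N hp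
  have := hm (max m k) (le_max_left _ _)
  calc S p k ≤ S p (max m k) := S_mono p (le_max_right _ _)
    _ = N := this

lemma S_eq_N_of_part_zero {p : ℕ → ℕ} {N : ℕ} (hp : IsPartitionFun p N) {i : ℕ}
    (h : p i = 0) : S p i = N := by
  obtain ⟨m, hm⟩ := S_eq_N hp
  have := hm (max m i) (le_max_left _ _)
  rw [S_const_of_zero hp.1 h _ (le_max_right m i)] at this
  exact this

lemma ncard_Iio (j : ℕ) : (Set.Iio j).ncard = j := by
  rw [← Finset.coe_range, Set.ncard_coe_finset, Finset.card_range]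

/-- a finite lower subset of ℕ is an initial segment. -/
lemma lower_eq_Iio {A : Set ℕ} (hfin : A.Finite) (hlow : ∀ ⦃j k : ℕ⦄, k ≤ j → j ∈ A → k ∈ A) :
    A = Set.Iio A.ncard := by
  ext j
  simp only [Set.mem_Iio]
  constructor
  · intro hj
    have hsub : Set.Iio (j+1) ⊆ A := by
      intro k hk
      exact hlow (by simpa using Nat.lt_succ_iff.mp (Set.mem_Iio.1 hk)) hj
    have h1 : (Set.Iio (j+1)).ncard ≤ A.ncard := Set.ncard_le_ncard hsub hfin
    rw [ncard_Iio] at h1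
    omega
  · intro hj
    by_contra hjA
    have hsub : A ⊆ Set.Iio j := by
      intro a ha
      rw [Set.mem_Iio]
      by_contra h'
      exact hjA (hlow (by omega : j ≤ a) ha)
    have h1 : A.ncard ≤ (Set.Iio j).ncard := Set.ncard_le_ncard hsub (Set.finite_Iio j)
    rw [ncard_Iio] at h1
    omega

end Stmt7Aux
namespace Stmt7Aux

open Finset

section Transpose

variable {p : ℕ → ℕ} {N : ℕ}

lemma support_subset (hp : IsPartitionFun p N) :
    ∃ m, ∀ i c, c + 1 ≤ p i → i < m := by
  obtain ⟨ha, m, hz, hs⟩ := hp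
  refine ⟨m, fun i c hc => ?_⟩
  by_contra h
  have := hz i (by omega)
  omega

lemma setT_finite (hp : IsPartitionFun p N) (c : ℕ) : {j | c + 1 ≤ p j}.Finite := by
  obtain ⟨m, hm⟩ := support_subset hp
  exact Set.Finite.subset (Set.finite_Iio m) (fun j hj => hm j c hj)

lemma setT_eq (hp : IsPartitionFun p N) (c : ℕ) :
    {j | c + 1 ≤ p j} = Set.Iio (ptranspose p c) := by
  exact lower_eq_Iio (setT_finite hp c)
    (fun j k hkj hj => le_trans hj (hp.1 hkj))

lemma lt_T_iff (hp : IsPartitionFun p N) {i j : ℕ} :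
    i < ptranspose p j ↔ j < p i := by
  constructor
  · intro h
    have : i ∈ Set.Iio (ptranspose p j) := h
    rw [← setT_eq hp] at this
    exact this
  · intro h
    have : i ∈ {l | j + 1 ≤ p l} := h
    rw [setT_eq hp] at this
    exact this

lemma T_le_iff (hp : IsPartitionFun p N) {i j : ℕ} :
    ptranspose p j ≤ i ↔ p i ≤ j := by
  rw [← Nat.not_lt, ← Nat.not_lt, lt_T_iff hp]

lemma T_antitone (hp : IsPartitionFun p N) : Antitone (ptranspose p) := by
  intro a b hab
  apply Set.ncard_le_ncard _ (setT_finite hp a)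
  intro j hj
  simp only [Set.mem_setOf_eq] at hj ⊢
  omega

lemma T_part_count (hp : IsPartitionFun p N) (v : ℕ) :
    {j | p j = v + 1} = Set.Ico (ptranspose p (v + 1)) (ptranspose p v) := by
  have h1 := setT_eq hp v
  have h2 := setT_eq hp (v + 1)
  ext j
  simp only [Set.mem_setOf_eq, Set.mem_Ico]
  constructor
  · intro hj
    constructor
    · by_contra h
      have : j ∈ Set.Iio (ptranspose p (v+1)) := by
        rw [Set.mem_Iio]; omega
      rw [← h2] at this
      simp only [Set.mem_setOf_eq] at this
      omega
    · have : j ∈ {j | v + 1 ≤ p j} := by simp [hj]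
      rw [h1] at this
      exact this
  · intro ⟨hj1, hj2⟩
    have ha : j ∈ {j | v + 1 ≤ p j} := by rw [h1]; exact hj2
    have hb : j ∉ {j | v + 1 + 1 ≤ p j} := by
      rw [h2]
      simp only [Set.mem_Iio]
      omega
    simp only [Set.mem_setOf_eq] at ha hb
    omega

lemma ncard_Ico (a b : ℕ) : (Set.Ico a b).ncard = b - a := by
  rw [← Finset.coe_Ico, Set.ncard_coe_finset, Nat.card_Ico]

lemma partMult_eq (hp : IsPartitionFun p N) (v : ℕ) :
    partMult p (v + 1) = ptranspose p v - ptranspose p (v + 1) := by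
  unfold partMult
  rw [T_part_count hp v, ncard_Ico]

/-- transpose of the transpose: the set {j | T j = v} is an interval given by p. -/
lemma partMult_transpose (hp : IsPartitionFun p N) (v : ℕ) :
    partMult (ptranspose p) (v + 1) = p v - p (v + 1) := by
  unfold partMult
  have : {j | ptranspose p j = v + 1} = Set.Ico (p (v+1)) (p v) := by
    ext j
    simp only [Set.mem_setOf_eq, Set.mem_Ico]
    constructor
    · intro hj
      constructor
      · by_contra h
        have hlt : j < p (v + 1) := by omega
        have := (lt_T_iff hp (i := v + 1) (j := j)).2 hlt
        omega
      · have : v < ptranspose p j := by omega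
        exact (lt_T_iff hp).1 this
    · intro ⟨h1, h2⟩
      have ha : v < ptranspose p j := (lt_T_iff hp).2 h2
      have hb : ¬ (v + 1 < ptranspose p j) := by
        intro h
        have := (lt_T_iff hp).1 h
        omega
      omega
  rw [this, ncard_Ico]

lemma filter_lt_card (M c : ℕ) : ((Finset.range M).filter (fun i => i + 1 ≤ c)).card = min c M := by
  have : (Finset.range M).filter (fun i => i + 1 ≤ c) = Finset.range (min c M) := by
    ext i
    simp only [Finset.mem_filter, Finset.mem_range, Nat.lt_min]
    omega
  rw [this, Finset.card_range]

lemma T_partition (hp : IsPartitionFun p N) : IsPartitionFun (ptranspose p) N := by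
  obtain ⟨ha, m, hz, hs⟩ := hp
  have hp' : IsPartitionFun p N := ⟨ha, m, hz, hs⟩
  constructor
  · exact T_antitone hp'
  · refine ⟨p 0, fun i hi => ?_, ?_⟩
    · -- ptranspose p i = 0 for i ≥ p 0
      have : ∀ j, ¬ (i + 1 ≤ p j) := by
        intro j hj
        have := ha (Nat.zero_le j)
        omega
      have : {j | i + 1 ≤ p j} = (∅ : Set ℕ) := by
        ext j; simp only [Set.mem_setOf_eq, Set.mem_empty_iff_false, iff_false]; exact this j
      unfold ptranspose
      rw [this, Set.ncard_empty]
    · -- sum of transpose = N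
      have hTi : ∀ i, ptranspose p i = ((Finset.range m).filter (fun j => i + 1 ≤ p j)).card := by
        intro i
        unfold ptranspose
        have : {j | i + 1 ≤ p j} = ↑((Finset.range m).filter (fun j => i + 1 ≤ p j)) := by
          ext j
          simp only [Finset.coe_filter, Finset.mem_range, Set.mem_setOf_eq]
          constructor
          · intro hj
            refine ⟨?_, hj⟩
            by_contra h
            have := hz j (by omega)
            omega
          · exact fun h => h.2
        rw [this, Set.ncard_coe_finset]
      calc ∑ i ∈ Finset.range (p 0), ptranspose p i
          = ∑ i ∈ Finset.range (p 0), ((Finset.range m).filter (fun j => i + 1 ≤ p j)).card := by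
            exact Finset.sum_congr rfl (fun i _ => hTi i)
        _ = ∑ i ∈ Finset.range (p 0), ∑ j ∈ Finset.range m, (if i + 1 ≤ p j then 1 else 0) := by
            refine Finset.sum_congr rfl (fun i _ => ?_)
            rw [Finset.card_filter]
        _ = ∑ j ∈ Finset.range m, ∑ i ∈ Finset.range (p 0), (if i + 1 ≤ p j then 1 else 0) := by
            exact Finset.sum_comm
        _ = ∑ j ∈ Finset.range m, p j := by
            refine Finset.sum_congr rfl (fun j hj => ?_)
            have h1 : ∑ i ∈ Finset.range (p 0), (if i + 1 ≤ p j then 1 else 0)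
                = ((Finset.range (p 0)).filter (fun i => i + 1 ≤ p j)).card :=
              (Finset.card_filter _ _).symm
            rw [h1, filter_lt_card, Nat.min_eq_left (ha (Nat.zero_le j))]
        _ = N := hs

end Transpose

end Stmt7Aux
namespace Stmt7Aux

open Finset

section Corner

variable {p : ℕ → ℕ} {N : ℕ}

lemma T_eq_k_of_corner (hp : IsPartitionFun p N) {k v : ℕ} (hk : 1 ≤ k)
    (hv : p (k-1) = v + 1) (hc : p k ≤ v) : ptranspose p v = k := by
  have hset : {j | v + 1 ≤ p j} = Set.Iio k := by
    ext j
    simp only [Set.mem_setOf_eq, Set.mem_Iio]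
    constructor
    · intro hj
      by_contra h
      have : p j ≤ p k := hp.1 (by omega : k ≤ j)
      omega
    · intro hj
      have : p (k-1) ≤ p j := hp.1 (by omega : j ≤ k - 1)
      omega
  unfold ptranspose
  rw [hset, ncard_Iio]

lemma corner_block (hp : IsPartitionFun p N) {k : ℕ} (hk : 1 ≤ k) (hc : p k < p (k-1)) :
    ∃ a, a < k ∧ (a = 0 ∨ p a < p (a-1)) ∧ partMult p (p (k-1)) = k - a ∧
      S p k = S p a + (k - a) * p (k-1) := by
  set v := p (k-1) with hv
  have hv1 : 1 ≤ v := by omega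
  have hveq : p (k-1) = (v - 1) + 1 := by omega
  have hT : ptranspose p (v-1) = k := T_eq_k_of_corner hp hk hveq (by omega)
  set a := ptranspose p v with ha
  have hIa : {j | v + 1 ≤ p j} = Set.Iio a := by
    have := setT_eq hp v
    rwa [← ha] at this
  have hIb : {j | v ≤ p j} = Set.Iio k := by
    have := setT_eq hp (v-1)
    rw [hT] at this
    have hvv : v - 1 + 1 = v := by omega
    rwa [hvv] at this
  have hak : a < k := by
    have : (k-1) ∉ {j | v + 1 ≤ p j} := by simp only [Set.mem_setOf_eq]; omega
    rw [hIa, Set.mem_Iio] at this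
    omega
  have hflat : ∀ j, a ≤ j → j < k → p j = v := by
    intro j hja hjk
    have h1 : v ≤ p j := by
      have : j ∈ Set.Iio k := hjk
      rw [← hIb] at this
      exact this
    have h2 : ¬ (v + 1 ≤ p j) := by
      intro h
      have : j ∈ {j | v + 1 ≤ p j} := h
      rw [hIa, Set.mem_Iio] at this
      omega
    omega
  refine ⟨a, hak, ?_, ?_, ?_⟩
  · rcases Nat.eq_zero_or_pos a with h | h
    · exact Or.inl h
    · right
      have h1 : a - 1 ∈ Set.Iio a := by rw [Set.mem_Iio]; omega
      rw [← hIa] at h1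
      have h2 : a ∉ Set.Iio a := by simp
      rw [← hIa] at h2
      simp only [Set.mem_setOf_eq] at h1 h2
      omega
  · -- partMult
    obtain ⟨w, hw⟩ : ∃ w, v = w + 1 := ⟨v-1, by omega⟩
    have hTw : ptranspose p w = k := by rw [← hT]; congr 1; omega
    rw [hw, partMult_eq hp, hTw, ← hw, ← ha]
  · -- sum split
    have hsplit : S p k = S p a + ∑ j ∈ Finset.Ico a k, p j := by
      unfold S
      simp only [Finset.range_eq_Ico]
      exact (Finset.sum_Ico_consecutive _ (Nat.zero_le a) (le_of_lt hak)).symm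
    rw [hsplit]
    congr 1
    calc ∑ j ∈ Finset.Ico a k, p j = ∑ _j ∈ Finset.Ico a k, v := by
          refine Finset.sum_congr rfl (fun j hj => ?_)
          rw [Finset.mem_Ico] at hj
          exact hflat j hj.1 hj.2
      _ = (k - a) * v := by rw [Finset.sum_const, Nat.card_Ico, smul_eq_mul]

lemma corner_parity_of_mult (hp : IsPartitionFun p N) (ρ : ℕ)
    (hm : ∀ v, 0 < v → ¬ Even (v + ρ) → Even (partMult p v)) :
    ∀ k, 1 ≤ k → p k < p (k-1) → Even (S p k + ρ * k) := by
  suffices H : ∀ k, (k = 0 ∨ (1 ≤ k ∧ p k < p (k-1))) → Even (S p k + ρ * k) by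
    intro k hk hc
    exact H k (Or.inr ⟨hk, hc⟩)
  intro k
  induction k using Nat.strong_induction_on with
  | _ k ih =>
    rintro (rfl | ⟨hk, hc⟩)
    · simp [S_zero]
    · obtain ⟨a, hak, ha0, hmv, hS⟩ := corner_block hp hk hc
      have hEa : Even (S p a + ρ * a) := by
        apply ih a hak
        rcases ha0 with h | h
        · exact Or.inl h
        · right
          refine ⟨?_, h⟩
          by_contra h'
          have : a = 0 := by omega
          rw [this] at h
          simp at h
      obtain ⟨q, hq⟩ : ∃ q, k = a + q := ⟨k - a, by omega⟩
      have hq' : k - a = q := by omega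
      rw [hq'] at hS
      have hkey : S p k + ρ * k = (S p a + ρ * a) + q * (p (k-1) + ρ) := by
        rw [hS, hq]
        ring
      rw [hkey]
      apply Even.add hEa
      rcases Nat.even_or_odd (p (k-1) + ρ) with he | ho
      · exact he.mul_left _
      · have hEq : Even q := by
          rw [← hq', ← hmv]
          exact hm _ (by omega) (by rwa [Nat.not_even_iff_odd])
        exact hEq.mul_right _

lemma mult_parity_of_corner (hp : IsPartitionFun p N) (ρ : ℕ)
    (hcor : ∀ k, 1 ≤ k → p k < p (k-1) → Even (S p k + ρ * k)) :
    ∀ v, 0 < v → ¬ Even (v + ρ) → Even (partMult p v) := by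
  intro v hv hodd
  obtain ⟨w, rfl⟩ : ∃ w, v = w + 1 := ⟨v - 1, by omega⟩
  rw [partMult_eq hp]
  set a := ptranspose p (w+1) with ha
  set b := ptranspose p w with hb
  have hab : a ≤ b := T_antitone hp (by omega : w ≤ w + 1)
  rcases Nat.eq_or_lt_of_le hab with h | hlt
  · rw [← h]; simp
  · have hIa : {j | w + 1 + 1 ≤ p j} = Set.Iio a := setT_eq hp (w+1)
    have hIb : {j | w + 1 ≤ p j} = Set.Iio b := setT_eq hp w
    have hpb1 : p (b-1) = w + 1 := by
      have h1 : b - 1 ∈ Set.Iio b := by rw [Set.mem_Iio]; omega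
      rw [← hIb] at h1
      have h2 : b - 1 ∉ Set.Iio a := by rw [Set.mem_Iio]; omega
      rw [← hIa] at h2
      simp only [Set.mem_setOf_eq] at h1 h2
      omega
    have hpb : p b ≤ w := by
      have h2 : b ∉ Set.Iio b := by simp
      rw [← hIb] at h2
      simp only [Set.mem_setOf_eq] at h2
      omega
    have hcb : Even (S p b + ρ * b) := hcor b (by omega) (by omega)
    have hca : Even (S p a + ρ * a) := by
      rcases Nat.eq_zero_or_pos a with h | h
      · rw [h]; simp [S_zero]
      · apply hcor a h
        have h1 : a - 1 ∈ Set.Iio a := by rw [Set.mem_Iio]; omega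
        rw [← hIa] at h1
        have h2 : a ∉ Set.Iio a := by simp
        rw [← hIa] at h2
        simp only [Set.mem_setOf_eq] at h1 h2
        omega
    have hflat : ∀ j, a ≤ j → j < b → p j = w + 1 := by
      intro j hja hjb
      have h1 : j ∈ Set.Iio b := hjb
      rw [← hIb] at h1
      have h2 : j ∉ Set.Iio a := by rw [Set.mem_Iio]; omega
      rw [← hIa] at h2
      simp only [Set.mem_setOf_eq] at h1 h2
      omega
    have hS : S p b = S p a + (b - a) * (w + 1) := by
      have hsplit : S p b = S p a + ∑ j ∈ Finset.Ico a b, p j := by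
        unfold S
        simp only [Finset.range_eq_Ico]
        exact (Finset.sum_Ico_consecutive _ (Nat.zero_le a) (le_of_lt hlt)).symm
      rw [hsplit]
      congr 1
      calc ∑ j ∈ Finset.Ico a b, p j = ∑ _j ∈ Finset.Ico a b, (w+1) := by
            refine Finset.sum_congr rfl (fun j hj => ?_)
            rw [Finset.mem_Ico] at hj
            exact hflat j hj.1 hj.2
        _ = (b - a) * (w+1) := by rw [Finset.sum_const, Nat.card_Ico, smul_eq_mul]
    obtain ⟨q, hq⟩ : ∃ q, b = a + q := ⟨b - a, by omega⟩
    have hq' : b - a = q := by omega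
    rw [hq'] at hS ⊢
    have hkey : S p b + ρ * b = (S p a + ρ * a) + q * (w + 1 + ρ) := by
      rw [hS, hq]
      ring
    rw [hkey] at hcb
    have hmul : Even (q * (w + 1 + ρ)) := (Nat.even_add.1 hcb).1 hca
    rcases Nat.even_mul.1 hmul with h | h
    · exact h
    · exact absurd h hodd

end Corner

end Stmt7Aux
namespace Stmt7Aux

section CharWrappers

variable {p : ℕ → ℕ} {N : ℕ}

lemma typeB_corner (hB : IsTypeB p N) :
    ∀ k, 1 ≤ k → p k < p (k-1) → Even (S p k + 1 * k) := by
  apply corner_parity_of_mult hB.1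
  intro v hv hodd
  apply hB.2 v hv
  rcases Nat.even_or_odd v with h | h
  · exact h
  · exfalso; apply hodd; rcases h with ⟨c, hc⟩; exact ⟨c + 1, by omega⟩

lemma typeC_corner (hC : IsTypeC p N) :
    ∀ k, 1 ≤ k → p k < p (k-1) → Even (S p k + 0 * k) := by
  apply corner_parity_of_mult hC.1
  intro v hv hodd
  apply hC.2 v hv
  rw [Nat.add_zero] at hodd
  rwa [← Nat.not_even_iff_odd]

lemma typeB_of_corner (hp : IsPartitionFun p N)
    (h : ∀ k, 1 ≤ k → p k < p (k-1) → Even (S p k + 1 * k)) : IsTypeB p N := by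
  refine ⟨hp, fun i hi hev => ?_⟩
  apply mult_parity_of_corner hp 1 h i hi
  rcases hev with ⟨c, hc⟩
  intro ⟨c', hc'⟩
  omega

lemma typeC_of_corner (hp : IsPartitionFun p N)
    (h : ∀ k, 1 ≤ k → p k < p (k-1) → Even (S p k + 0 * k)) : IsTypeC p N := by
  refine ⟨hp, fun i hi hodd => ?_⟩
  apply mult_parity_of_corner hp 0 h i hi
  rcases hodd with ⟨c, hc⟩
  intro ⟨c', hc'⟩
  omega

end CharWrappers

/-- The key maximality lemma. -/
lemma max_dom (ρ : ℕ) {t h x : ℕ → ℕ}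
    (ht : ∀ i, t (i+1) ≤ t i)
    (hγ1 : ∀ k, S t k ≤ S h k) (hγ2 : ∀ k, S h k ≤ S t k + 1)
    (hpar : ∀ k, 1 ≤ k → S h k = S t k + 1 → ¬ Even (S t k + 1 + ρ * k))
    (hx : ∀ k, 1 ≤ k → x k < x (k-1) → Even (S x k + ρ * k))
    (hdom : ∀ k, S x k ≤ S h k) : ∀ k, S x k ≤ S t k := by
  intro k
  induction k with
  | zero => simp [S_zero]
  | succ k ih =>
    by_contra hcon
    have hxk : S x (k+1) = S t (k+1) + 1 := by
      have h1 := hdom (k+1); have h2 := hγ2 (k+1)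
      omega
    have hhk : S h (k+1) = S t (k+1) + 1 := by
      have h1 := hdom (k+1); have h2 := hγ2 (k+1); have h3 := hγ1 (k+1)
      omega
    have e1 : S x (k+1) = S x k + x k := S_succ _ _
    have e2 : S t (k+1) = S t k + t k := S_succ _ _
    have hxpart : t k + 1 ≤ x k := by omega
    have hxk1 : x (k+1) ≤ t (k+1) := by
      have h1 := hdom (k+2); have h2 := hγ2 (k+2)
      have e3 : S x (k+2) = S x (k+1) + x (k+1) := S_succ _ _
      have e4 : S t (k+2) = S t (k+1) + t (k+1) := S_succ _ _
      omega
    have hcorner : x (k+1) < x ((k+1)-1) := by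
      have h5 := ht k
      simp only [Nat.add_sub_cancel]
      omega
    have hev := hx (k+1) (by omega) hcorner
    rw [hxk] at hev
    exact hpar (k+1) (by omega) hhk hev

section Engine

/-- `Bd ρ e k`: partial sum parity obstruction at position `k`. -/
def Bd (ρ : ℕ) (e : ℕ → ℕ) (k : ℕ) : Prop := ¬ Even (S e k + ρ * k)

/-- corner at (1-indexed) position `k`. -/
def Cor (e : ℕ → ℕ) (k : ℕ) : Prop := e k < e (k - 1)

open Classical in
/-- the indicator of positions where the collapse drops the partial sum by 1. -/
noncomputable def del (ρ : ℕ) (e : ℕ → ℕ) : ℕ → ℕ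
  | 0 => 0
  | (k+1) => if Bd ρ e (k+1) ∧ (Cor e (k+1) ∨ del ρ e k = 1) then 1 else 0

/-- the collapse of `e`. -/
noncomputable def eng (ρ : ℕ) (e : ℕ → ℕ) : ℕ → ℕ :=
  fun i => e i + del ρ e i - del ρ e (i+1)

variable {ρ : ℕ} {e : ℕ → ℕ} {N : ℕ}

lemma del_le_one (ρ : ℕ) (e : ℕ → ℕ) (k : ℕ) : del ρ e k ≤ 1 := by
  cases k with
  | zero => simp [del]
  | succ k => rw [del]; split <;> omega

lemma del_one_iff (ρ : ℕ) (e : ℕ → ℕ) (k : ℕ) :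
    del ρ e (k+1) = 1 ↔ (Bd ρ e (k+1) ∧ (Cor e (k+1) ∨ del ρ e k = 1)) := by
  rw [del]; split <;> simp_all

lemma del_bd {k : ℕ} (h : del ρ e k = 1) : Bd ρ e k := by
  cases k with
  | zero => simp [del] at h
  | succ k => exact ((del_one_iff ρ e k).1 h).1

lemma SB_succ (ρ : ℕ) (e : ℕ → ℕ) (k : ℕ) :
    S e (k+1) + ρ * (k+1) = (S e k + ρ * k) + (e k + ρ) := by
  rw [S_succ]; ring

lemma bd_step_even {k : ℕ} (h : Even (e k + ρ)) : Bd ρ e (k+1) ↔ Bd ρ e k := by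
  unfold Bd
  rw [SB_succ ρ e k, Nat.even_add]
  tauto

lemma even_part_of_bd_bd {k : ℕ} (h1 : Bd ρ e k) (h2 : Bd ρ e (k+1)) :
    Even (e k + ρ) := by
  by_contra hodd
  unfold Bd at h1 h2
  rw [SB_succ ρ e k, Nat.even_add] at h2
  tauto

lemma S_one (e : ℕ → ℕ) : S e 1 = e 0 := by
  rw [show (1:ℕ) = 0 + 1 from rfl, S_succ, S_zero]
  omega

/-- key propagation lemma: an obstruction at a position whose part has the
"propagating" parity forces a drop at the previous position. -/
lemma core (he : IsPartitionFun e N) :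
    ∀ j, Even (e (j+1) + ρ) → Bd ρ e (j+2) → del ρ e (j+1) = 1 := by
  intro j
  induction j with
  | zero =>
    intro hev hbd
    have hbd1 : Bd ρ e 1 := (bd_step_even hev).1 hbd
    by_cases hcor : Cor e 1
    · rw [del_one_iff]
      exact ⟨hbd1, Or.inl hcor⟩
    · exfalso
      unfold Cor at hcor
      have hcor' : ¬ e 1 < e 0 := by simpa using hcor
      have hflat : e 1 = e 0 := le_antisymm (he.1 (by omega)) (by omega)
      unfold Bd at hbd1
      rw [S_one, Nat.mul_one] at hbd1
      rw [← hflat] at hbd1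
      exact hbd1 hev
  | succ i ih =>
    intro hev hbd
    have hbd1 : Bd ρ e (i+2) := (bd_step_even hev).1 hbd
    by_cases hcor : Cor e (i+2)
    · rw [del_one_iff]
      exact ⟨hbd1, Or.inl hcor⟩
    · unfold Cor at hcor
      have hcor' : ¬ e (i+2) < e (i+1) := by
        intro hlt
        exact hcor (by simpa using hlt)
      have hflat : e (i+2) = e (i+1) := le_antisymm (he.1 (by omega)) (by omega)
      have hev' : Even (e (i+1) + ρ) := by rwa [hflat] at hev
      have := ih hev' hbd1
      rw [del_one_iff]
      exact ⟨hbd1, Or.inr this⟩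

end Engine

end Stmt7Aux
namespace Stmt7Aux

section Engine2

variable {ρ : ℕ} {e : ℕ → ℕ} {N : ℕ}

lemma del_part_pos (he : IsPartitionFun e N) (hgood : ρ = 1 ∨ (ρ = 0 ∧ Even N)) :
    ∀ k, del ρ e k = 1 → 1 ≤ e (k-1) := by
  intro k hk
  cases k with
  | zero => simp [del] at hk
  | succ j =>
    obtain ⟨hbd, hcc⟩ := (del_one_iff ρ e j).1 hk
    simp only [Nat.add_sub_cancel]
    rcases hcc with hcor | hchain
    · unfold Cor at hcor
      have : e (j+1-1) ≤ e j := by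
        rcases Nat.eq_zero_or_pos j with rfl | h
        · simp
        · have : j + 1 - 1 = j := by omega
          rw [this]
      omega
    · have hbd0 : Bd ρ e j := del_bd hchain
      have hev : Even (e j + ρ) := even_part_of_bd_bd hbd0 hbd
      rcases hgood with rfl | ⟨rfl, hN⟩
      · rcases hev with ⟨c, hc⟩
        omega
      · by_contra hzero
        have hz : e j = 0 := by omega
        have hSN : S e j = N := S_eq_N_of_part_zero he hz
        have hS1 : S e (j+1) = N := by rw [S_succ, hz, hSN]; omega
        unfold Bd at hbd
        rw [hS1] at hbd
        simp only [Nat.zero_mul, Nat.add_zero] at hbd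
        exact hbd hN

lemma del_le_part (he : IsPartitionFun e N) (hgood : ρ = 1 ∨ (ρ = 0 ∧ Even N)) :
    ∀ i, del ρ e (i+1) ≤ e i + del ρ e i := by
  intro i
  rcases Nat.eq_zero_or_pos (del ρ e (i+1)) with h | h
  · omega
  · have h1 : del ρ e (i+1) = 1 := by have := del_le_one ρ e (i+1); omega
    have := del_part_pos he hgood (i+1) h1
    simp only [Nat.add_sub_cancel] at this
    omega

lemma S_eng (he : IsPartitionFun e N) (hgood : ρ = 1 ∨ (ρ = 0 ∧ Even N)) :
    ∀ k, S (eng ρ e) k + del ρ e k = S e k := by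
  intro k
  induction k with
  | zero => simp [S_zero, del]
  | succ k ih =>
    rw [S_succ, S_succ]
    have hv : eng ρ e k = e k + del ρ e k - del ρ e (k+1) := rfl
    have h1 := del_le_part he hgood k
    omega

lemma eng_anti (he : IsPartitionFun e N) (hgood : ρ = 1 ∨ (ρ = 0 ∧ Even N)) :
    ∀ i, eng ρ e (i+1) ≤ eng ρ e i := by
  intro i
  show e (i+1) + del ρ e (i+1) - del ρ e (i+2) ≤ e i + del ρ e i - del ρ e (i+1)
  have hmono : e (i+1) ≤ e i := he.1 (by omega)
  have hd0 := del_le_one ρ e i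
  have hd1 := del_le_one ρ e (i+1)
  have hd2 := del_le_one ρ e (i+2)
  rcases Nat.eq_zero_or_pos (del ρ e (i+1)) with h1 | h1'
  · omega
  have h1 : del ρ e (i+1) = 1 := by omega
  obtain ⟨hB1, hcc⟩ := (del_one_iff ρ e i).1 h1
  rcases Nat.eq_zero_or_pos (del ρ e (i+2)) with h2 | h2'
  swap
  · -- del (i+2) = 1 case
    have h2 : del ρ e (i+2) = 1 := by omega
    rcases Nat.eq_zero_or_pos (del ρ e i) with h0 | h0'
    · -- d0 = 0 : corner
      have hcor : Cor e (i+1) := by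
        rcases hcc with hc | hc
        · exact hc
        · omega
      unfold Cor at hcor
      simp only [Nat.add_sub_cancel] at hcor
      omega
    · omega
  · -- del (i+2) = 0 case
    have hnB2 : ¬ Bd ρ e (i+2) := by
      intro hB2
      have : del ρ e (i+2) = 1 := by
        rw [del_one_iff]
        exact ⟨hB2, Or.inr h1⟩
      omega
    have hodd : ¬ Even (e (i+1) + ρ) := by
      intro hev
      exact hnB2 ((bd_step_even hev).2 hB1)
    rcases Nat.eq_zero_or_pos (del ρ e i) with h0 | h0'
    · -- d0 = 0: corner at i+1, and gap ≥ 2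
      have hcor : Cor e (i+1) := by
        rcases hcc with hc | hc
        · exact hc
        · omega
      unfold Cor at hcor
      simp only [Nat.add_sub_cancel] at hcor
      -- show e i ≥ e (i+1) + 2
      by_contra hcon
      have hgap : e i = e (i+1) + 1 := by omega
      have hev0 : Even (e i + ρ) := by
        rcases Nat.even_or_odd (e (i+1) + ρ) with h | h
        · exact absurd h hodd
        · rcases h with ⟨c, hc⟩
          exact ⟨c+1, by omega⟩
      cases i with
      | zero =>
        unfold Bd at hB1
        rw [S_one, Nat.mul_one] at hB1
        exact hB1 hev0
      | succ m =>
        have := core he m hev0 hB1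
        omega
    · -- d0 = 1: parts differ by parity, so e (i+1) < e i
      have h0 : del ρ e i = 1 := by omega
      have hB0 : Bd ρ e i := del_bd h0
      have hev0 : Even (e i + ρ) := even_part_of_bd_bd hB0 hB1
      have hne : e i ≠ e (i+1) := by
        intro hEq
        rw [hEq] at hev0
        exact hodd hev0
      omega

lemma eng_partition (he : IsPartitionFun e N) (hgood : ρ = 1 ∨ (ρ = 0 ∧ Even N)) :
    IsPartitionFun (eng ρ e) N := by
  obtain ⟨ha, m, hz, hs⟩ := he
  have he' : IsPartitionFun e N := ⟨ha, m, hz, hs⟩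
  constructor
  · exact antitone_nat_of_succ_le (eng_anti he' hgood)
  · refine ⟨m + 1, fun i hi => ?_, ?_⟩
    · have hz1 : e i = 0 := hz i (by omega)
      have hd1 : del ρ e i = 0 := by
        by_contra h
        have h1 : del ρ e i = 1 := by have := del_le_one ρ e i; omega
        have := del_part_pos he' hgood i h1
        have : e (i - 1) = 0 := hz (i-1) (by omega)
        omega
      show e i + del ρ e i - del ρ e (i+1) = 0
      have hd2 := del_le_part he' hgood i
      omega
    · have h1 := S_eng he' hgood (m+1)
      have hd : del ρ e (m+1) = 0 := by
        by_contra h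
        have h2 : del ρ e (m+1) = 1 := by have := del_le_one ρ e (m+1); omega
        have := del_part_pos he' hgood (m+1) h2
        have : e m = 0 := hz m (by omega)
        simp only [Nat.add_sub_cancel] at *
        omega
      have hSN : S e (m+1) = N := by
        have hzm : e m = 0 := hz m le_rfl
        rw [S_const_of_zero ha hzm (m+1) (by omega)]
        exact hs
      show S (eng ρ e) (m+1) = N
      omega

end Engine2

end Stmt7Aux
namespace Stmt7Aux

section Engine3

variable {ρ : ℕ} {e : ℕ → ℕ} {N : ℕ}

lemma eng_corner (he : IsPartitionFun e N) (hgood : ρ = 1 ∨ (ρ = 0 ∧ Even N)) :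
    ∀ k, 1 ≤ k → eng ρ e k < eng ρ e (k-1) → Even (S (eng ρ e) k + ρ * k) := by
  intro k hk hcor
  obtain ⟨j, rfl⟩ : ∃ j, k = j + 1 := ⟨k - 1, by omega⟩
  have hS := S_eng he hgood (j+1)
  rcases Nat.eq_zero_or_pos (del ρ e (j+1)) with hd | hd'
  · -- no drop at k : show no obstruction
    have hnb : ¬ Bd ρ e (j+1) := by
      intro hB
      -- from del = 0 : no corner of e at j+1, and del j = 0
      have hnc : ¬ (Cor e (j+1) ∨ del ρ e j = 1) := by
        intro hcc
        have : del ρ e (j+1) = 1 := (del_one_iff ρ e j).2 ⟨hB, hcc⟩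
        omega
      push_neg at hnc
      obtain ⟨hnc1, hnc2⟩ := hnc
      have hd0 : del ρ e j = 0 := by have := del_le_one ρ e j; omega
      unfold Cor at hnc1
      have hflat : e (j+1) = e j := by
        have h1 : ¬ e (j+1) < e (j+1-1) := hnc1
        have h2 : e (j+1) ≤ e j := he.1 (by omega)
        have h3 : j + 1 - 1 = j := by omega
        rw [h3] at h1
        omega
      -- eng corner at j+1 forces del (j+2) = 1
      have heng1 : eng ρ e (j+1) = e (j+1) - del ρ e (j+2) := by
        show e (j+1) + del ρ e (j+1) - del ρ e (j+2) = _
        omega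
      have heng0 : eng ρ e j = e j := by
        show e j + del ρ e j - del ρ e (j+1) = e j
        omega
      have hj1 : j + 1 - 1 = j := by omega
      rw [hj1, heng0, heng1] at hcor
      have hd2 : del ρ e (j+2) = 1 := by
        have := del_le_one ρ e (j+2); omega
      have hB2 : Bd ρ e (j+2) := del_bd hd2
      have hev : Even (e (j+1) + ρ) := even_part_of_bd_bd hB hB2
      -- propagate : contradiction via core / base case
      cases j with
      | zero =>
        unfold Bd at hB
        rw [S_one, Nat.mul_one] at hB
        rw [hflat] at hev
        exact hB hev
      | succ m =>
        have hev' : Even (e (m+1) + ρ) := by rwa [hflat] at hev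
        have := core he m hev' hB
        omega
    unfold Bd at hnb
    rw [not_not] at hnb
    have hSe : S (eng ρ e) (j+1) = S e (j+1) := by omega
    rwa [hSe]
  · -- drop at k
    have hd : del ρ e (j+1) = 1 := by have := del_le_one ρ e (j+1); omega
    have hB : Bd ρ e (j+1) := del_bd hd
    unfold Bd at hB
    have hpos : 1 ≤ S e (j+1) := by
      have h1 := del_part_pos he hgood (j+1) hd
      simp only [Nat.add_sub_cancel] at h1
      rw [S_succ]
      omega
    rw [Nat.even_iff] at hB ⊢
    push_neg at hB
    have hB' : (S e (j+1) + ρ * (j+1)) % 2 = 1 := by omega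
    omega

lemma eng_dominated (he : IsPartitionFun e N) (hgood : ρ = 1 ∨ (ρ = 0 ∧ Even N)) :
    Dominates e (eng ρ e) := by
  intro k
  have := S_eng he hgood k
  show S (eng ρ e) k ≤ S e k
  omega

lemma eng_max (he : IsPartitionFun e N) (hgood : ρ = 1 ∨ (ρ = 0 ∧ Even N))
    {x : ℕ → ℕ} (hx : ∀ k, 1 ≤ k → x k < x (k-1) → Even (S x k + ρ * k))
    (hdom : Dominates e x) : Dominates (eng ρ e) x := by
  intro k
  show S x k ≤ S (eng ρ e) k
  refine max_dom ρ (eng_anti he hgood) ?_ ?_ ?_ hx (fun k => hdom k) k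
  · intro k
    have := S_eng he hgood k
    omega
  · intro k
    have := S_eng he hgood k
    have := del_le_one ρ e k
    omega
  · intro k hk hdrop
    have hS := S_eng he hgood k
    have hd : del ρ e k = 1 := by have := del_le_one ρ e k; omega
    have hB : Bd ρ e k := del_bd hd
    unfold Bd at hB
    intro hev
    apply hB
    have : S e k = S (eng ρ e) k + 1 := by omega
    rw [this]
    exact hev

/-- The main engine theorem, B version. -/
lemma engine_B (he : IsPartitionFun e N) : IsBCollapse e (eng 1 e) N := by
  have hgood : (1:ℕ) = 1 ∨ ((1:ℕ) = 0 ∧ Even N) := Or.inl rfl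
  refine ⟨?_, eng_dominated he hgood, ?_⟩
  · exact typeB_of_corner (eng_partition he hgood) (eng_corner he hgood)
  · intro b' hb' hdom'
    exact eng_max he hgood (typeB_corner hb') hdom'

/-- The main engine theorem, C version. -/
lemma engine_C (he : IsPartitionFun e N) (hN : Even N) : IsCCollapse e (eng 0 e) N := by
  have hgood : (0:ℕ) = 1 ∨ ((0:ℕ) = 0 ∧ Even N) := Or.inr ⟨rfl, hN⟩
  refine ⟨?_, eng_dominated he hgood, ?_⟩
  · exact typeC_of_corner (eng_partition he hgood) (eng_corner he hgood)
  · intro c' hc' hdom'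
    exact eng_max he hgood (typeC_corner hc') hdom'

end Engine3

end Stmt7Aux
namespace Stmt7Aux

lemma dominates_antisymm {p q : ℕ → ℕ} (h1 : Dominates p q) (h2 : Dominates q p) :
    q = p := by
  apply eq_of_S_eq
  intro k
  exact le_antisymm (h1 k) (h2 k)

section Dplus

variable {d : ℕ → ℕ} {N : ℕ}

lemma S_dplus (d : ℕ → ℕ) : ∀ k, 1 ≤ k → S (dplus d) k = S d k + 1 := by
  intro k hk
  induction k with
  | zero => omega
  | succ j ih =>
    rcases Nat.eq_zero_or_pos j with rfl | hj
    · rw [S_one, S_one]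
      unfold dplus
      simp
    · rw [S_succ, S_succ, ih hj]
      have : dplus d j = d j := by unfold dplus; simp [Nat.pos_iff_ne_zero.1 hj]
      omega

lemma dplus_partition (hd : IsPartitionFun d N) : IsPartitionFun (dplus d) (N+1) := by
  obtain ⟨ha, m, hz, hs⟩ := hd
  constructor
  · apply antitone_nat_of_succ_le
    intro i
    unfold dplus
    cases i with
    | zero => simp; have := ha (by omega : (0:ℕ) ≤ 1); omega
    | succ j => simp; exact ha (by omega)
  · refine ⟨m + 1, fun i hi => ?_, ?_⟩
    · unfold dplus
      rw [if_neg (by omega : ¬ i = 0)]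
      exact hz i (by omega)
    · show S (dplus d) (m+1) = N + 1
      rw [S_dplus d (m+1) (by omega)]
      have h2 : S d (m+1) = N := by
        have hzm : d m = 0 := hz m le_rfl
        rw [S_const_of_zero ha hzm (m+1) (by omega)]
        exact hs
      omega

end Dplus

section Dminus

variable {b : ℕ → ℕ} {N : ℕ}

lemma dminus_spec (hb : IsPartitionFun b N) (hN : 1 ≤ N) :
    ∃ L, 1 ≤ L ∧ (∀ i, i < L → 1 ≤ b i) ∧ (∀ i, L ≤ i → b i = 0) ∧
      (∀ k, S (dminus b) k + (if L ≤ k then 1 else 0) = S b k) ∧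
      (∀ i, i + 1 ≠ L → dminus b i = b i) ∧
      IsPartitionFun (dminus b) (N-1) := by
  have hex : ∃ i, b i = 0 := by
    obtain ⟨ha, m, hz, hs⟩ := hb
    exact ⟨m, hz m le_rfl⟩
  classical
  set L := Nat.find hex with hL
  have hbL : b L = 0 := Nat.find_spec hex
  have hmin : ∀ i, i < L → b i ≠ 0 := fun i hi => Nat.find_min hex hi
  have hzero : ∀ i, L ≤ i → b i = 0 := by
    intro i hi
    have := hb.1 hi
    omega
  have hL1 : 1 ≤ L := by
    by_contra h
    have hL0 : L = 0 := by omega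
    have h0 : b 0 = 0 := by
      have h' := hbL
      rw [hL0] at h'
      exact h'
    have : S b 0 = N := S_eq_N_of_part_zero hb h0
    rw [S_zero] at this
    omega
  have hpos : ∀ i, i < L → 1 ≤ b i := by
    intro i hi
    have := hmin i hi
    omega
  have hdm : ∀ i, dminus b i = if i + 1 = L then b i - 1 else b i := by
    intro i
    unfold dminus
    by_cases h : i + 1 = L
    · rw [if_pos h, if_pos]
      constructor
      · exact hpos i (by omega)
      · exact hzero (i+1) (by omega)
    · rw [if_neg h, if_neg]
      intro ⟨h1, h2⟩
      have hiL : i < L := by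
        by_contra h'
        have := hzero i (by omega)
        omega
      have : L ≤ i + 1 := Nat.find_le h2
      omega
  have hS : ∀ k, S (dminus b) k + (if L ≤ k then 1 else 0) = S b k := by
    intro k
    induction k with
    | zero => simp [S_zero]; omega
    | succ j ih =>
      rw [S_succ, S_succ, hdm j]
      by_cases h : j + 1 = L
      · rw [if_pos h]
        have h1 : ¬ (L ≤ j) := by omega
        have h2 : L ≤ j + 1 := by omega
        rw [if_neg h1] at ih
        rw [if_pos h2]
        have := hpos j (by omega)
        omega
      · rw [if_neg h]
        by_cases h2 : L ≤ j
        · rw [if_pos h2] at ih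
          rw [if_pos (by omega : L ≤ j + 1)]
          omega
        · rw [if_neg h2] at ih
          rw [if_neg (by omega : ¬ L ≤ j + 1)]
          omega
  refine ⟨L, hL1, hpos, hzero, hS, fun i hi => by rw [hdm i, if_neg hi], ?_, ?_⟩
  · apply antitone_nat_of_succ_le
    intro i
    rw [hdm i, hdm (i+1)]
    have hmono : b (i+1) ≤ b i := hb.1 (by omega)
    by_cases h : i + 1 = L
    · rw [if_pos h, if_neg (by omega)]
      have := hzero (i+1) (by omega)
      omega
    · rw [if_neg h]
      by_cases h2 : i + 2 = L
      · rw [if_pos h2]; omega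
      · rw [if_neg h2]; omega
  · refine ⟨L, fun i hi => ?_, ?_⟩
    · rw [hdm i, if_neg (by omega)]
      exact hzero i hi
    · have h1 := hS L
      rw [if_pos le_rfl] at h1
      have h2 : S b L = N := by
        apply S_eq_N_of_part_zero hb
        exact hzero L le_rfl
      show S (dminus b) L = N - 1
      omega

end Dminus

end Stmt7Aux
namespace Stmt7Aux

lemma direction1 {n : ℕ} {d : ℕ → ℕ} (hd : IsSpecialC d (2 * n)) :
    (∃ b, IsBCollapse (dplus d) b (2 * n + 1)) ∧
    ∀ b, IsBCollapse (dplus d) b (2 * n + 1) →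
      IsSpecialB b (2 * n + 1) ∧
      ∀ c, IsCCollapse (dminus b) c (2 * n) → c = d := by
  obtain ⟨hdC, hdCt⟩ := hd
  have hdp : IsPartitionFun d (2*n) := hdC.1
  -- row pairing from the transpose being type C
  have hpair : ∀ a, (d (2*a) + d (2*a+1)) % 2 = 0 := by
    intro a
    have h1 : Even (partMult (ptranspose d) (2*a+1)) := hdCt.2 (2*a+1) (by omega) ⟨a, by omega⟩
    rw [partMult_transpose hdp (2*a)] at h1
    have h2 : d (2*a+1) ≤ d (2*a) := hdp.1 (by omega)
    rw [Nat.even_iff] at h1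
    omega
  have hSd : ∀ a, S d (2*a) % 2 = 0 := by
    intro a
    induction a with
    | zero => simp [S_zero]
    | succ a ih =>
      have e1 : S d (2*(a+1)) = S d (2*a) + d (2*a) + d (2*a+1) := by
        have h1 : 2*(a+1) = (2*a+1)+1 := by ring
        rw [h1, S_succ, S_succ]
      have := hpair a
      omega
  set e := dplus d with he_def
  have he : IsPartitionFun e (2*n+1) := dplus_partition hdp
  have hSe : ∀ k, 1 ≤ k → S e k = S d k + 1 := by
    intro k hk
    rw [he_def]
    exact S_dplus d k hk
  have he_part : ∀ i, 1 ≤ i → e i = d i := by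
    intro i hi
    rw [he_def]
    unfold dplus
    rw [if_neg (by omega)]
  have he0 : e 0 = d 0 + 1 := by rw [he_def]; simp [dplus]
  set b := eng 1 e with hb_def
  have hcol : IsBCollapse e b (2*n+1) := engine_B he
  have hgood : (1:ℕ) = 1 ∨ ((1:ℕ) = 0 ∧ Even (2*n+1)) := Or.inl rfl
  have hbp : IsPartitionFun b (2*n+1) := hcol.1.1
  -- parity of S d at odd positions
  have hSd1 : ∀ a, S d (2*a+1) % 2 = d (2*a) % 2 := by
    intro a
    have e1 : S d (2*a+1) = S d (2*a) + d (2*a) := S_succ d (2*a)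
    have := hSd a
    omega
  -- the drop indicator at odd positions
  have hdelodd : ∀ a, del 1 e (2*a+1) = 1 ↔ d (2*a) % 2 = 1 := by
    intro a
    constructor
    · intro h
      by_contra hodd
      have hB := del_bd h
      unfold Bd at hB
      apply hB
      rw [Nat.even_iff]
      have h1 := hSe (2*a+1) (by omega)
      have h2 := hSd1 a
      omega
    · intro hodd
      have hB : Bd 1 e (2*a+1) := by
        unfold Bd
        rw [Nat.even_iff]
        have h1 := hSe (2*a+1) (by omega)
        have h2 := hSd1 a
        omega
      rcases Nat.eq_zero_or_pos a with rfl | ha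
      · have hcor : Cor e 1 := by
          unfold Cor
          show e 1 < e 0
          have h1 : e 1 = d 1 := he_part 1 le_rfl
          have h2 : d 1 ≤ d 0 := hdp.1 (by omega)
          omega
        have h3 := (del_one_iff 1 e 0).2 ⟨hB, Or.inl hcor⟩
        exact h3
      · obtain ⟨a', rfl⟩ : ∃ a', a = a' + 1 := ⟨a - 1, by omega⟩
        have hidx : 2*(a'+1) = 2*a'+2 := by ring
        rw [hidx] at hB hodd ⊢
        have hev : Even (e (2*a'+1+1) + 1) := by
          have h1 : e (2*a'+2) = d (2*a'+2) := he_part _ (by omega)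
          rw [Nat.even_iff]
          have h2 : 2*a'+1+1 = 2*a'+2 := by omega
          rw [h2, h1]
          omega
        have hBd2 : Bd 1 e (2*a'+1+2) := by
          have h2 : 2*a'+1+2 = 2*a'+2+1 := by omega
          rw [h2]; exact hB
        have hc := core he (2*a'+1) hev hBd2
        have hc' : del 1 e (2*a'+2) = 1 := by
          have h2x : 2*a'+1+1 = 2*a'+2 := by omega
          rwa [h2x] at hc
        exact (del_one_iff 1 e (2*a'+2)).2 ⟨hB, Or.inr hc'⟩
  -- S b is odd at odd positions
  have hSbodd : ∀ a, S b (2*a+1) % 2 = 1 := by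
    intro a
    have h1 := S_eng he hgood (2*a+1)
    have h2 := hSe (2*a+1) (by omega)
    have hd1 := del_le_one 1 e (2*a+1)
    have h3 := hSd1 a
    rcases Nat.even_or_odd (d (2*a)) with hpar2 | hpar2
    · have h4 : ¬ (del 1 e (2*a+1) = 1) := by
        intro h5
        have := (hdelodd a).1 h5
        rw [Nat.even_iff] at hpar2
        omega
      rw [Nat.even_iff] at hpar2
      rw [← hb_def] at h1
      omega
    · have h4 : del 1 e (2*a+1) = 1 := (hdelodd a).2 (by rw [Nat.odd_iff] at hpar2; exact hpar2)
      rw [Nat.odd_iff] at hpar2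
      rw [← hb_def] at h1
      omega
  -- b is special
  have hbspec : IsSpecialB b (2*n+1) := by
    refine ⟨hcol.1, T_partition hbp, ?_⟩
    intro i hi hev
    obtain ⟨a, rfl⟩ : ∃ a, i = 2*a + 2 := by
      rcases hev with ⟨c, hc⟩
      exact ⟨c - 1, by omega⟩
    have h1 : partMult (ptranspose b) (2*a+1+1) = b (2*a+1) - b (2*a+1+1) :=
      partMult_transpose hbp (2*a+1)
    have hidx : 2*a+1+1 = 2*a+2 := by omega
    rw [hidx] at h1
    rw [h1]
    have h2 : b (2*a+2) ≤ b (2*a+1) := hbp.1 (by omega)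
    have h3 := hSbodd a
    have h4 := hSbodd (a+1)
    have e1 : S b (2*(a+1)+1) = S b (2*a+1) + b (2*a+1) + b (2*a+2) := by
      have hx : 2*(a+1)+1 = (2*a+2)+1 := by ring
      have hy : 2*a+2 = (2*a+1)+1 := by omega
      rw [hx, S_succ, hy, S_succ]
    rw [Nat.even_iff]
    omega
  -- the dminus side
  obtain ⟨L, hL1, hposL, hzeroL, hSL, hdmb, hbm_part⟩ := dminus_spec hbp (by omega)
  have hbm : IsPartitionFun (dminus b) (2*n) := by
    have : 2*n+1-1 = 2*n := by omega
    rwa [this] at hbm_part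
  have hSbN : ∀ k, L ≤ k → S b k = 2*n+1 := by
    intro k hk
    have h0 : b L = 0 := hzeroL L le_rfl
    have h1 : S b L = 2*n+1 := S_eq_N_of_part_zero hbp h0
    rw [S_const_of_zero hbp.1 h0 k hk]
    exact h1
  have hLd : ∀ i, 1 ≤ d i → i < L := by
    intro i hdi
    by_contra h
    have hbz : b i = 0 := hzeroL i (by omega)
    have h1 : S b i = 2*n+1 := S_eq_N_of_part_zero hbp hbz
    have h2 := S_eng he hgood i
    rw [← hb_def] at h2
    have h3 : S e i ≤ 2*n+1 := S_le_N he i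
    rcases Nat.eq_zero_or_pos i with rfl | hi
    · rw [S_zero] at h1
      omega
    have h6 : S d i = 2*n := by
      have h5 := hSe i hi
      omega
    have h7 : S d (i+1) ≤ 2*n := S_le_N hdp (i+1)
    have h8 : S d (i+1) = S d i + d i := S_succ d i
    omega
  have hdomd : Dominates (dminus b) d := by
    intro k
    show S d k ≤ S (dminus b) k
    have h1 := hSL k
    by_cases hk : L ≤ k
    · rw [if_pos hk] at h1
      have h2 := hSbN k hk
      have h3 := S_le_N hdp k
      omega
    · rw [if_neg hk] at h1
      rcases Nat.eq_zero_or_pos k with rfl | hk1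
      · simp [S_zero]
      have h2 := S_eng he hgood k
      rw [← hb_def] at h2
      have h3 := hSe k hk1
      have h4 := del_le_one 1 e k
      omega
  have hmaxd : ∀ x, IsTypeC x (2*n) → Dominates (dminus b) x → Dominates d x := by
    intro x hx hdx k
    show S x k ≤ S d k
    refine max_dom 0 (fun i => hdp.1 (by omega : i ≤ i+1)) (fun k => hdomd k) ?_ ?_
      (typeC_corner hx) (fun k => hdx k) k
    · intro k
      by_cases hk : L ≤ k
      · have h1 := hSL k; rw [if_pos hk] at h1
        have h2 := hSbN k hk
        have hd0 : d k = 0 := by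
          by_contra h'
          have := hLd k (by omega)
          omega
        have h4 : S d k = 2*n := S_eq_N_of_part_zero hdp hd0
        omega
      · have h1 := hSL k; rw [if_neg hk] at h1
        rcases Nat.eq_zero_or_pos k with rfl | hk1
        · simp [S_zero]
        have h2 := S_eng he hgood k
        rw [← hb_def] at h2
        have h3 := hSe k hk1
        omega
    · intro k hk hdrop
      have hkL : k < L := by
        by_contra h
        have h1 := hSL k; rw [if_pos (by omega)] at h1
        have h2 := hSbN k (by omega)
        have hd0 : d k = 0 := by
          by_contra h'
          have := hLd k (by omega)
          omega
        have h4 : S d k = 2*n := S_eq_N_of_part_zero hdp hd0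
        omega
      have h1 := hSL k; rw [if_neg (by omega)] at h1
      have h2 := S_eng he hgood k
      rw [← hb_def] at h2
      have h3 := hSe k (by omega)
      have hdk : del 1 e k = 0 := by omega
      have hparS : S d k % 2 = 0 := by
        rcases Nat.even_or_odd k with hke | hko
        · obtain ⟨a, ha⟩ := hke
          have := hSd a
          have hx : 2*a = k := by omega
          rwa [hx] at this
        · obtain ⟨a, ha⟩ := hko
          have h6 : ¬ (d (2*a) % 2 = 1) := by
            intro h7
            have h8 := (hdelodd a).2 h7
            have hx : 2*a+1 = k := by omega
            rw [hx] at h8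
            omega
          have h9 := hSd1 a
          have hx : 2*a+1 = k := by omega
          rw [hx] at h9
          omega
      intro hev
      rw [Nat.even_iff] at hev
      omega
  refine ⟨⟨b, hcol⟩, ?_⟩
  intro b' hcol'
  have hbb : b' = b :=
    dominates_antisymm (hcol.2.2 b' hcol'.1 hcol'.2.1) (hcol'.2.2 b hcol.1 hcol.2.1)
  rw [hbb]
  refine ⟨hbspec, ?_⟩
  intro c hc
  have h1 : Dominates c d := hc.2.2 d hdC hdomd
  have h2 : Dominates d c := fun k => hmaxd c hc.1 hc.2.1 k
  exact dominates_antisymm h2 h1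

end Stmt7Aux
namespace Stmt7Aux

lemma direction2 {n : ℕ} {f : ℕ → ℕ} (hf : IsSpecialB f (2 * n + 1)) :
    (∃ c, IsCCollapse (dminus f) c (2 * n)) ∧
    ∀ c, IsCCollapse (dminus f) c (2 * n) →
      IsSpecialC c (2 * n) ∧
      ∀ b, IsBCollapse (dplus c) b (2 * n + 1) → b = f := by
  obtain ⟨hfB, hfBt⟩ := hf
  have hfp : IsPartitionFun f (2*n+1) := hfB.1
  have hpair : ∀ a, (f (2*a+1) + f (2*a+2)) % 2 = 0 := by
    intro a
    have h1 : Even (partMult (ptranspose f) (2*a+2)) := hfBt.2 (2*a+2) (by omega) ⟨a+1, by omega⟩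
    have h2 := partMult_transpose hfp (2*a+1)
    have hidx : 2*a+1+1 = 2*a+2 := by omega
    rw [hidx] at h2
    rw [h2] at h1
    have h3 : f (2*a+2) ≤ f (2*a+1) := hfp.1 (by omega)
    rw [Nat.even_iff] at h1
    omega
  have hSf0 : ∀ a, S f (2*a+1) % 2 = f 0 % 2 := by
    intro a
    induction a with
    | zero => rw [S_one]
    | succ a ih =>
      have e1 : S f (2*(a+1)+1) = S f (2*a+1) + f (2*a+1) + f (2*a+2) := by
        have hx : 2*(a+1)+1 = (2*a+2)+1 := by ring
        have hy : 2*a+2 = (2*a+1)+1 := by omega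
        rw [hx, S_succ, hy, S_succ]
      have := hpair a
      omega
  have hSfodd : ∀ a, S f (2*a+1) % 2 = 1 := by
    have hf0odd : f 0 % 2 = 1 := by
      obtain ⟨m, hm⟩ := S_eq_N hfp
      have h1 := hm (2*m+1) (by omega)
      have h2 := hSf0 m
      omega
    intro a
    have := hSf0 a
    omega
  obtain ⟨L, hL1, hposL, hzeroL, hSL, hdmf, hg_part⟩ := dminus_spec hfp (by omega)
  have hg : IsPartitionFun (dminus f) (2*n) := by
    have hx : 2*n+1-1 = 2*n := by omega
    rwa [hx] at hg_part
  have hgoodC : (0:ℕ) = 1 ∨ ((0:ℕ) = 0 ∧ Even (2*n)) := Or.inr ⟨rfl, ⟨n, by omega⟩⟩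
  have hSfN : ∀ k, L ≤ k → S f k = 2*n+1 := by
    intro k hk
    have h0 : f L = 0 := hzeroL L le_rfl
    have h1 : S f L = 2*n+1 := S_eq_N_of_part_zero hfp h0
    rw [S_const_of_zero hfp.1 h0 k hk]
    exact h1
  set c := eng 0 (dminus f) with hc_def
  have hcolC : IsCCollapse (dminus f) c (2*n) := engine_C hg ⟨n, by omega⟩
  have hcp : IsPartitionFun c (2*n) := hcolC.1.1
  -- even-position drops
  have hdeleven : ∀ a, Bd 0 (dminus f) (2*a+2) → del 0 (dminus f) (2*a+2) = 1 := by
    intro a hB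
    have hkL : 2*a+2 < L := by
      by_contra h
      have h1 := hSL (2*a+2); rw [if_pos (by omega)] at h1
      have h2 := hSfN (2*a+2) (by omega)
      unfold Bd at hB
      apply hB
      rw [Nat.even_iff]
      omega
    have h1 := hSL (2*a+2); rw [if_neg (by omega)] at h1
    have h1' := hSL (2*a+1); rw [if_neg (by omega)] at h1'
    have hgp : dminus f (2*a+1) = f (2*a+1) := hdmf (2*a+1) (by omega)
    have hfev : f (2*a+1) % 2 = 0 := by
      have e1 : S f (2*a+2) = S f (2*a+1) + f (2*a+1) := by
        have hy : 2*a+2 = (2*a+1)+1 := by omega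
        rw [hy, S_succ]
      have h3 := hSfodd a
      unfold Bd at hB
      rw [Nat.even_iff] at hB
      omega
    have hev : Even (dminus f (2*a+1) + 0) := by
      rw [Nat.even_iff, hgp]
      omega
    have hBd2 : Bd 0 (dminus f) (2*a+2) := hB
    have hc2 := core hg (2*a) hev hBd2
    exact (del_one_iff 0 (dminus f) (2*a+1)).2 ⟨hB, Or.inr hc2⟩
  have hSceven : ∀ a, S c (2*a) % 2 = 0 := by
    intro a
    rcases Nat.eq_zero_or_pos a with rfl | ha
    · simp [S_zero]
    have h1 := S_eng hg hgoodC (2*a)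
    rw [← hc_def] at h1
    have hd1 := del_le_one 0 (dminus f) (2*a)
    rcases Nat.even_or_odd (S (dminus f) (2*a)) with hpar2 | hpar2
    · have hdz : del 0 (dminus f) (2*a) = 0 := by
        by_contra h
        have hone : del 0 (dminus f) (2*a) = 1 := by omega
        have := del_bd hone
        unfold Bd at this
        apply this
        simpa using hpar2
      rw [Nat.even_iff] at hpar2
      omega
    · have hB : Bd 0 (dminus f) (2*a) := by
        unfold Bd
        rw [Nat.odd_iff] at hpar2
        rw [Nat.even_iff]
        omega
      obtain ⟨a', rfl⟩ : ∃ a', a = a' + 1 := ⟨a - 1, by omega⟩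
      have hidx : 2*(a'+1) = 2*a'+2 := by ring
      rw [hidx] at hB h1 hd1 ⊢
      have hdel := hdeleven a' hB
      rw [Nat.odd_iff] at hpar2
      rw [hidx] at hpar2
      omega
  -- c is special
  have hcspec : IsSpecialC c (2*n) := by
    refine ⟨hcolC.1, T_partition hcp, ?_⟩
    intro i hi hodd
    obtain ⟨a, rfl⟩ : ∃ a, i = 2*a + 1 := by
      rcases hodd with ⟨a, ha⟩
      exact ⟨a, by omega⟩
    have h1 : partMult (ptranspose c) (2*a+1) = c (2*a) - c (2*a+1) :=
      partMult_transpose hcp (2*a)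
    rw [h1]
    have h2 : c (2*a+1) ≤ c (2*a) := hcp.1 (by omega)
    have h3 := hSceven a
    have h4 := hSceven (a+1)
    have e1 : S c (2*(a+1)) = S c (2*a) + c (2*a) + c (2*a+1) := by
      have hx : 2*(a+1) = (2*a+1)+1 := by ring
      have hy : 2*a+1 = (2*a)+1 := by omega
      rw [hx, S_succ, hy, S_succ]
    rw [Nat.even_iff]
    omega
  -- f is the B-collapse of dplus c
  have hdomf : Dominates (dplus c) f := by
    intro k
    show S f k ≤ S (dplus c) k
    rcases Nat.eq_zero_or_pos k with rfl | hk
    · simp [S_zero]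
    rw [S_dplus c k hk]
    have h1 := S_eng hg hgoodC k
    rw [← hc_def] at h1
    have h2 := hSL k
    have hd1 := del_le_one 0 (dminus f) k
    by_cases hkL : L ≤ k
    · rw [if_pos hkL] at h2
      have h3 := hSfN k hkL
      have hdz : del 0 (dminus f) k = 0 := by
        by_contra h
        have hone : del 0 (dminus f) k = 1 := by omega
        have := del_bd hone
        unfold Bd at this
        apply this
        rw [Nat.even_iff]
        omega
      omega
    · rw [if_neg hkL] at h2
      omega
  have hmaxf : ∀ x, IsTypeB x (2*n+1) → Dominates (dplus c) x → Dominates f x := by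
    intro x hx hdx k
    show S x k ≤ S f k
    refine max_dom 1 (fun i => hfp.1 (by omega : i ≤ i+1)) (fun k => hdomf k) ?_ ?_
      (typeB_corner hx) (fun k => hdx k) k
    · intro k
      rcases Nat.eq_zero_or_pos k with rfl | hk
      · simp [S_zero]
      rw [S_dplus c k hk]
      have h1 := S_eng hg hgoodC k
      rw [← hc_def] at h1
      have h2 := hSL k
      have hd1 := del_le_one 0 (dminus f) k
      by_cases hkL : L ≤ k
      · rw [if_pos hkL] at h2
        omega
      · rw [if_neg hkL] at h2
        omega
    · intro k hk heq
      rw [S_dplus c k hk] at heq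
      have h1 := S_eng hg hgoodC k
      rw [← hc_def] at h1
      have h2 := hSL k
      have hd1 := del_le_one 0 (dminus f) k
      have hkL : ¬ (L ≤ k) := by
        intro h
        rw [if_pos h] at h2
        omega
      rw [if_neg hkL] at h2
      have hdz : del 0 (dminus f) k = 0 := by omega
      have hSgf : S (dminus f) k = S f k := by omega
      rcases Nat.even_or_odd k with hke | hko
      · obtain ⟨a, ha⟩ := hke
        have ha2 : k = 2*a := by omega
        have haa : 1 ≤ a := by omega
        have hnB : ¬ Bd 0 (dminus f) k := by
          intro hB
          obtain ⟨a', ha'⟩ : ∃ a', a = a' + 1 := ⟨a - 1, by omega⟩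
          have hidx : k = 2*a'+2 := by omega
          rw [hidx] at hB
          have := hdeleven a' hB
          rw [hidx] at hdz
          omega
        unfold Bd at hnB
        rw [not_not, Nat.even_iff] at hnB
        intro hev
        rw [Nat.even_iff] at hev
        omega
      · obtain ⟨a, ha⟩ := hko
        have h3 := hSfodd a
        have hx : 2*a+1 = k := by omega
        rw [hx] at h3
        intro hev
        rw [Nat.even_iff] at hev
        omega
  refine ⟨⟨c, hcolC⟩, ?_⟩
  intro c' hc'
  have hcc : c' = c :=
    dominates_antisymm (hcolC.2.2 c' hc'.1 hc'.2.1) (hc'.2.2 c hcolC.1 hcolC.2.1)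
  rw [hcc]
  refine ⟨hcspec, ?_⟩
  intro b hb
  have h1 : Dominates b f := hb.2.2 f hfB hdomf
  have h2 : Dominates f b := fun k => hmaxf b hb.1 hb.2.1 k
  exact dominates_antisymm h2 h1

end Stmt7Aux

/-- the map `d ↦ (d⁺)_B` is a bijection from special type C partitions of
`2n` to special type B partitions of `2n+1`, with inverse `f ↦ (f⁻)_C`. -/
theorem stmt7 (n : ℕ) :
    (∀ d, IsSpecialC d (2 * n) →
        (∃ b, IsBCollapse (dplus d) b (2 * n + 1)) ∧
        ∀ b, IsBCollapse (dplus d) b (2 * n + 1) →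
          IsSpecialB b (2 * n + 1) ∧
          ∀ c, IsCCollapse (dminus b) c (2 * n) → c = d) ∧
    (∀ f, IsSpecialB f (2 * n + 1) →
        (∃ c, IsCCollapse (dminus f) c (2 * n)) ∧
        ∀ c, IsCCollapse (dminus f) c (2 * n) →
          IsSpecialC c (2 * n) ∧
          ∀ b, IsBCollapse (dplus c) b (2 * n + 1) → b = f) := by
  constructor
  · intro d hd
    exact Stmt7Aux.direction1 hd
  · intro f hf
    exact Stmt7Aux.direction2 hf
end

section
/- Every type B partition d_B (an element of P_1(2n+1)) can be uniquely expressed as a concatenation of consecutive blocks, each of one of the following four types: type B1 blocks [a, a] with a odd; type B1* blocks [b, b] with b even; type B2 blocks [a_1, b_1, b_1, ..., b_k, b_k, a_2] with a_1, a_2 odd, all b_j even, a_1 > b_1 ≥ ... ≥ b_k > a_2, and k ≥ 0; type B3 blocks [a, b_1, b_1, ..., b_k, b_k] with a odd, all b_j even, a > b_1 ≥ ... ≥ b_k, k ≥ 0. Moreover, exactly one block of type B3 appears, and it is positioned at the end of the partition. -/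
/-- `[b₁, b₁, b₂, b₂, ...]`: each entry of `bs` doubled. -/
def pairList (bs : List ℕ) : List ℕ := bs.flatMap fun b => [b, b]

/-- Type B1 block: `[a, a]` with `a` odd. -/
def IsB1 (T : List ℕ) : Prop := ∃ a, Odd a ∧ T = [a, a]

/-- Type B1* block: `[b, b]` with `b` even (and positive). -/
def IsB1s (T : List ℕ) : Prop := ∃ b, 0 < b ∧ Even b ∧ T = [b, b]

/-- Type B2 block: `[a₁, b₁², ..., b_k², a₂]` with `a₁, a₂` odd, all `b_j` even,
`a₁ > b₁ ≥ ... ≥ b_k > a₂` and `k ≥ 0`. -/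
def IsB2 (T : List ℕ) : Prop :=
  ∃ a₁ a₂ bs, Odd a₁ ∧ Odd a₂ ∧ a₂ < a₁ ∧
    (∀ b ∈ bs, Even b ∧ a₂ < b ∧ b < a₁) ∧ List.Pairwise (· ≥ ·) bs ∧
    T = a₁ :: (pairList bs ++ [a₂])

/-- Type B3 block: `[a, b₁², ..., b_k²]` with `a` odd, all `b_j` even (positive),
`a > b₁ ≥ ... ≥ b_k`, `k ≥ 0`. -/
def IsB3 (T : List ℕ) : Prop :=
  ∃ a bs, Odd a ∧ (∀ b ∈ bs, 0 < b ∧ Even b ∧ b < a) ∧ List.Pairwise (· ≥ ·) bs ∧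
    T = a :: pairList bs

/-- A type B partition of `N`, as a weakly decreasing list of positive integers summing
to `N` in which every even part occurs with even multiplicity. -/
def IsTypeBList (d : List ℕ) (N : ℕ) : Prop :=
  List.Pairwise (· ≥ ·) d ∧ (∀ x ∈ d, 0 < x) ∧ d.sum = N ∧
    ∀ i, Even i → Even (d.count i)

/-- `Ts` is a decomposition of `d` into consecutive blocks of types B1, B1*, B2, B3. -/
def IsBlockDecomp (d : List ℕ) (Ts : List (List ℕ)) : Prop :=
  d = Ts.flatten ∧ ∀ T ∈ Ts, IsB1 T ∨ IsB1s T ∨ IsB2 T ∨ IsB3 T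

/-- The block of type B3 appears exactly once, and at the end. -/
def B3AtEnd (Ts : List (List ℕ)) : Prop :=
  ∃ Ts' T, Ts = Ts' ++ [T] ∧ IsB3 T ∧ ∀ T' ∈ Ts', ¬ IsB3 T'

/-!
Read a type B partition from the top. An even head `b` has even multiplicity, so it is repeated
and forms a B1* block `[b, b]`. An odd head `a` is followed by a run of even parts, each lying
strictly between `a` and the next odd part; hence all copies of such a part lie inside the run, so
the run consists of pairs. If an odd part follows the run, the block closes there (B1 or B2);
otherwise the run is the rest of the partition and forms the B3 block. Blocks of types B1, B1*, B2
have even sum, so what remains still has odd sum and the process can only stop at a B3 block.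

Uniqueness holds for arbitrary lists: the rule above reads the first block off the list itself.
-/

lemma ne_of_even_of_odd {e o : ℕ} (he : Even e) (ho : Odd o) : e ≠ o := by
  rintro rfl
  exact Nat.not_even_iff_odd.2 ho he

section pairList

@[simp]
lemma pairList_cons (b : ℕ) (bs : List ℕ) : pairList (b :: bs) = b :: b :: pairList bs := rfl

@[simp]
lemma mem_pairList {x : ℕ} {bs : List ℕ} : x ∈ pairList bs ↔ x ∈ bs := by
  simp [pairList]

lemma sum_pairList (bs : List ℕ) : (pairList bs).sum = 2 * bs.sum := by
  induction bs with
  | nil => rfl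
  | cons b bs ih => simp [ih]; ring

lemma count_pairList (i : ℕ) (bs : List ℕ) : (pairList bs).count i = 2 * bs.count i := by
  induction bs with
  | nil => rfl
  | cons b bs ih => simp only [pairList_cons, List.count_cons, ih]; split <;> omega

lemma sublist_pairList (bs : List ℕ) : bs.Sublist (pairList bs) := by
  induction bs with
  | nil => exact List.Sublist.slnil
  | cons b bs ih => exact (ih.cons b).cons_cons b

lemma eq_cons_self_of_even_count {x : ℕ} {l : List ℕ} (hs : (x :: l).Pairwise (· ≥ ·))
    (hc : Even ((x :: l).count x)) : ∃ l', l = x :: l' := by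
  rw [List.count_cons_self] at hc
  have hx : x ∈ l := List.count_pos_iff.1 (by rcases hc with ⟨k, hk⟩; omega)
  obtain _ | ⟨y, l'⟩ := l
  · simp at hx
  · refine ⟨l', ?_⟩
    obtain ⟨hxy, hs'⟩ := List.pairwise_cons.1 hs
    rcases List.mem_cons.1 hx with rfl | hx'
    · rfl
    · rw [le_antisymm ((List.pairwise_cons.1 hs').1 x hx') (hxy y (by simp))]

theorem exists_eq_pairList : ∀ {l : List ℕ}, l.Pairwise (· ≥ ·) →
    (∀ i ∈ l, Even (l.count i)) → ∃ bs, bs.Pairwise (· ≥ ·) ∧ l = pairList bs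
  | [], _, _ => ⟨[], List.Pairwise.nil, rfl⟩
  | x :: l, hs, hc => by
    obtain ⟨l', rfl⟩ := eq_cons_self_of_even_count hs (hc x (by simp))
    have hs' : l'.Pairwise (· ≥ ·) := (List.pairwise_cons.1 (List.pairwise_cons.1 hs).2).2
    have hc' : ∀ i ∈ l', Even (l'.count i) := fun i hi => by
      have := hc i (by simp [hi])
      simp only [List.count_cons] at this
      split at this <;> simpa [Nat.even_add_one] using this
    obtain ⟨bs, -, rfl⟩ := exists_eq_pairList hs' hc'
    exact ⟨x :: bs, hs.sublist (sublist_pairList _), rfl⟩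

end pairList

section blocks

def IsInnerBlock (T : List ℕ) : Prop := IsB1 T ∨ IsB1s T ∨ IsB2 T

lemma isBlock_iff {T : List ℕ} :
    IsB1 T ∨ IsB1s T ∨ IsB2 T ∨ IsB3 T ↔ IsInnerBlock T ∨ IsB3 T := by
  simp only [IsInnerBlock, or_assoc]

lemma IsInnerBlock.ne_nil {T : List ℕ} (hT : IsInnerBlock T) : T ≠ [] := by
  rcases hT with ⟨_, _, rfl⟩ | ⟨_, _, _, rfl⟩ | ⟨_, _, _, _, _, _, _, _, rfl⟩ <;> simp

lemma IsInnerBlock.even_sum {T : List ℕ} (hT : IsInnerBlock T) : Even T.sum := by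
  rcases hT with ⟨a, -, rfl⟩ | ⟨b, -, -, rfl⟩ |
    ⟨a₁, a₂, bs, ha₁, ha₂, -, -, -, rfl⟩
  · simp
  · simp
  · simp only [List.sum_cons, List.sum_append, sum_pairList, List.sum_nil, add_zero]
    rw [Nat.odd_iff] at ha₁ ha₂
    rw [Nat.even_iff]
    omega

lemma IsInnerBlock.even_count {T : List ℕ} (hT : IsInnerBlock T) {i : ℕ} (hi : Even i) :
    Even (T.count i) := by
  rcases hT with ⟨a, -, rfl⟩ | ⟨b, -, -, rfl⟩ |
    ⟨a₁, a₂, bs, ha₁, ha₂, -, -, -, rfl⟩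
  · simp only [List.count_cons, List.count_nil]; split <;> simp
  · simp only [List.count_cons, List.count_nil]; split <;> simp
  · simp [count_pairList, (ne_of_even_of_odd hi ha₁).symm,
      (ne_of_even_of_odd hi ha₂).symm]

lemma IsB3.odd_sum {T : List ℕ} (hT : IsB3 T) : Odd T.sum := by
  obtain ⟨a, bs, ha, -, -, rfl⟩ := hT
  simpa [sum_pairList] using ha.add_even (even_two_mul bs.sum)

lemma IsInnerBlock.not_isB3 {T : List ℕ} (hT : IsInnerBlock T) : ¬ IsB3 T :=
  fun h3 => Nat.not_even_iff_odd.2 h3.odd_sum hT.even_sum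

end blocks

section uniqueness

def firstBlock : List ℕ → List ℕ
  | [] => []
  | x :: rest =>
    if Even x then x :: rest.take 1
    else x :: (rest.takeWhile (Even ·) ++ (rest.dropWhile (Even ·)).take 1)

lemma firstBlock_append {T R : List ℕ} (hT : IsB1 T ∨ IsB1s T ∨ IsB2 T ∨ IsB3 T)
    (hR : IsB3 T → R = []) : firstBlock (T ++ R) = T := by
  rcases hT with ⟨a, ha, rfl⟩ | ⟨b, -, hb, rfl⟩ |
    ⟨a₁, a₂, bs, ha₁, ha₂, -, hbs, -, rfl⟩ | hT3
  · simp [firstBlock, Nat.not_even_iff_odd.2 ha]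
  · simp [firstBlock, hb]
  · have hev : ∀ e ∈ pairList bs, decide (Even e) = true := by simp_all
    simp [firstBlock, Nat.not_even_iff_odd.2 ha₁, Nat.not_even_iff_odd.2 ha₂,
      List.takeWhile_append_of_pos hev, List.dropWhile_append_of_pos hev]
  · obtain rfl := hR hT3
    obtain ⟨a, bs, ha, hbs, -, rfl⟩ := hT3
    have hev : ∀ e ∈ pairList bs, decide (Even e) = true := by simp_all
    simp [firstBlock, Nat.not_even_iff_odd.2 ha, List.takeWhile_eq_self_iff.2 hev,
      List.dropWhile_eq_nil_iff.2 hev]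

lemma not_b3AtEnd_nil : ¬ B3AtEnd [] := by
  rintro ⟨Ts', T, h, -⟩
  simp at h

lemma b3AtEnd_cons_iff {T : List ℕ} {Ts : List (List ℕ)} :
    B3AtEnd (T :: Ts) ↔ IsB3 T ∧ Ts = [] ∨ ¬ IsB3 T ∧ B3AtEnd Ts := by
  constructor
  · rintro ⟨_ | ⟨U, Ts'⟩, Tb, heq, hb3, hall⟩
    · simp only [List.nil_append, List.cons.injEq] at heq
      exact Or.inl ⟨heq.1 ▸ hb3, heq.2⟩
    · simp only [List.cons_append, List.cons.injEq] at heq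
      obtain ⟨rfl, rfl⟩ := heq
      exact Or.inr ⟨hall T (by simp), Ts', Tb, rfl, hb3, fun T' hT' => hall T' (by simp [hT'])⟩
  · rintro (⟨h3, rfl⟩ | ⟨h3, Ts', Tb, rfl, hb3, hall⟩)
    · exact ⟨[], T, rfl, h3, by simp⟩
    · exact ⟨T :: Ts', Tb, rfl, hb3, by simpa [h3] using hall⟩

theorem eq_of_isBlockDecomp_of_b3AtEnd {d : List ℕ} {Ts Ts' : List (List ℕ)}
    (h : IsBlockDecomp d Ts) (hend : B3AtEnd Ts) (h' : IsBlockDecomp d Ts')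
    (hend' : B3AtEnd Ts') : Ts = Ts' := by
  induction Ts generalizing d Ts' with
  | nil => exact absurd hend not_b3AtEnd_nil
  | cons T Ts ih =>
    obtain _ | ⟨T', Ts'⟩ := Ts'
    · exact absurd hend' not_b3AtEnd_nil
    obtain ⟨rfl, hblocks⟩ := h
    obtain ⟨hd, hblocks'⟩ := h'
    rw [b3AtEnd_cons_iff] at hend hend'
    have hlast {U : List ℕ} {Us : List (List ℕ)}
        (hU : IsB3 U ∧ Us = [] ∨ ¬ IsB3 U ∧ B3AtEnd Us) (h3 : IsB3 U) : Us.flatten = [] := by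
      obtain ⟨-, rfl⟩ := hU.resolve_right fun h => h.1 h3
      rfl
    have hd' : T ++ Ts.flatten = T' ++ Ts'.flatten := by simpa using hd
    have hT : T' = T := calc
      T' = firstBlock (T' ++ Ts'.flatten) :=
        (firstBlock_append (hblocks' T' (by simp)) (hlast hend')).symm
      _ = firstBlock (T ++ Ts.flatten) := by rw [hd']
      _ = T := firstBlock_append (hblocks T (by simp)) (hlast hend)
    subst hT
    have hrest : Ts.flatten = Ts'.flatten := List.append_cancel_left hd'
    rcases hend with ⟨h3, rfl⟩ | ⟨hn3, hend⟩ <;>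
      rcases hend' with ⟨h3', rfl⟩ | ⟨hn3', hend'⟩
    · rfl
    · exact absurd h3 hn3'
    · exact absurd h3' hn3
    · rw [ih ⟨rfl, fun U hU => hblocks U (by simp [hU])⟩ hend
        ⟨hrest, fun U hU => hblocks' U (by simp [hU])⟩ hend']

end uniqueness

section existence

lemma exists_even_prefix (l : List ℕ) :
    ∃ m, (∀ e ∈ m, Even e) ∧ (l = m ∨ ∃ o q, Odd o ∧ l = m ++ o :: q) := by
  induction l with
  | nil => exact ⟨[], by simp, Or.inl rfl⟩
  | cons y l ih =>
    rcases Nat.even_or_odd y with hy | hy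
    · obtain ⟨m, hm, rfl | ⟨o, q, ho, rfl⟩⟩ := ih
      · exact ⟨y :: l, List.forall_mem_cons.2 ⟨hy, hm⟩, Or.inl rfl⟩
      · exact ⟨y :: m, List.forall_mem_cons.2 ⟨hy, hm⟩, Or.inr ⟨o, q, ho, rfl⟩⟩
    · exact ⟨[], by simp, Or.inr ⟨y, l, hy, rfl⟩⟩

lemma isB3_cons {x : ℕ} {m : List ℕ} (hs : (x :: m).Pairwise (· ≥ ·))
    (hpos : ∀ e ∈ m, 0 < e) (hx : Odd x) (hm : ∀ e ∈ m, Even e)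
    (hc : ∀ i, Even i → Even ((x :: m).count i)) :
    IsB3 (x :: m) := by
  obtain ⟨hxm, hsm⟩ := List.pairwise_cons.1 hs
  have hcm : ∀ i ∈ m, Even (m.count i) := fun i hi => by
    simpa [List.count_cons, (ne_of_even_of_odd (hm i hi) hx).symm] using hc i (hm i hi)
  obtain ⟨bs, hbs, rfl⟩ := exists_eq_pairList hsm hcm
  refine ⟨x, bs, hx, fun b hb => ?_, hbs, rfl⟩
  have hb' : b ∈ pairList bs := mem_pairList.2 hb
  exact ⟨hpos b hb', hm b hb', lt_of_le_of_ne (hxm b hb') (ne_of_even_of_odd (hm b hb') hx)⟩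

lemma isInnerBlock_cons_append {x o : ℕ} {m q : List ℕ}
    (hs : (x :: (m ++ o :: q)).Pairwise (· ≥ ·)) (hx : Odd x) (ho : Odd o)
    (hm : ∀ e ∈ m, Even e) (hc : ∀ i, Even i → Even ((x :: (m ++ o :: q)).count i)) :
    IsInnerBlock (x :: (m ++ [o])) := by
  obtain ⟨hxm, hs⟩ := List.pairwise_cons.1 hs
  obtain ⟨hsm, hsoq, hmo⟩ := List.pairwise_append.1 hs
  have hbetween : ∀ e ∈ m, o < e ∧ e < x := fun e he =>
    ⟨lt_of_le_of_ne (hmo e he o (by simp)) (ne_of_even_of_odd (hm e he) ho).symm,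
      lt_of_le_of_ne (hxm e (by simp [he])) (ne_of_even_of_odd (hm e he) hx)⟩
  have hoq : ∀ z ∈ o :: q, z ≤ o := by simpa using (List.pairwise_cons.1 hsoq).1
  have hcm : ∀ i ∈ m, Even (m.count i) := fun i hi => by
    have hi_oq : i ∉ o :: q := fun h => by have := hoq i h; have := hbetween i hi; omega
    simpa [List.count_cons, List.count_append, (ne_of_even_of_odd (hm i hi) hx).symm,
      List.count_eq_zero.2 hi_oq] using hc i (hm i hi)
  obtain ⟨bs, hbs, rfl⟩ := exists_eq_pairList hsm hcm
  rcases (hxm o (by simp)).lt_or_eq with hox | rfl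
  · exact Or.inr (Or.inr ⟨x, o, bs, hx, ho, hox,
      fun b hb => ⟨hm b (mem_pairList.2 hb), hbetween b (mem_pairList.2 hb)⟩, hbs, rfl⟩)
  · obtain rfl : bs = [] := List.eq_nil_iff_forall_not_mem.2 fun b hb => by
      have := hbetween b (mem_pairList.2 hb); omega
    exact Or.inl ⟨o, ho, rfl⟩

theorem IsTypeBList.isB3_or_exists_innerBlock_append {d : List ℕ} {N : ℕ}
    (hd : IsTypeBList d N) (hne : d ≠ []) :
    IsB3 d ∨ ∃ T q, d = T ++ q ∧ IsInnerBlock T := by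
  obtain ⟨hs, hpos, -, hc⟩ := hd
  obtain _ | ⟨x, rest⟩ := d
  · exact absurd rfl hne
  rcases Nat.even_or_odd x with hx | hx
  · obtain ⟨q, rfl⟩ := eq_cons_self_of_even_count hs (hc x hx)
    exact Or.inr ⟨[x, x], q, rfl, Or.inr (Or.inl ⟨x, hpos x (by simp), hx, rfl⟩)⟩
  obtain ⟨m, hm, rfl | ⟨o, q, ho, rfl⟩⟩ := exists_even_prefix rest
  · exact Or.inl (isB3_cons hs (fun e he => hpos e (by simp [he])) hx hm hc)
  · exact Or.inr ⟨x :: (m ++ [o]), q, by simp, isInnerBlock_cons_append hs hx ho hm hc⟩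

lemma IsTypeBList.of_innerBlock_append {T q : List ℕ} {N : ℕ} (hd : IsTypeBList (T ++ q) N)
    (hT : IsInnerBlock T) : IsTypeBList q (N - T.sum) := by
  obtain ⟨hs, hpos, hsum, hc⟩ := hd
  refine ⟨(List.pairwise_append.1 hs).2.1, fun x hx => hpos x (by simp [hx]), ?_,
    fun i hi => ?_⟩
  · rw [← hsum, List.sum_append]; omega
  · have := hc i hi
    rw [List.count_append, Nat.even_add] at this
    exact this.1 (hT.even_count hi)

theorem IsTypeBList.exists_blockDecomp {d : List ℕ} {N : ℕ} (hd : IsTypeBList d N)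
    (hN : Odd N) : ∃ Ts, IsBlockDecomp d Ts ∧ B3AtEnd Ts := by
  induction hlen : d.length using Nat.strong_induction_on generalizing d N with
  | _ len ih =>
    have hne : d ≠ [] := by
      rintro rfl
      exact Nat.not_even_iff_odd.2 hN (by simp [← hd.2.2.1])
    rcases hd.isB3_or_exists_innerBlock_append hne with h3 | ⟨T, q, rfl, hT⟩
    · exact ⟨[d], ⟨by simp, by simp [h3]⟩, b3AtEnd_cons_iff.2 (Or.inl ⟨h3, rfl⟩)⟩
    have hTN : T.sum ≤ N := hd.2.2.1 ▸ by simp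
    obtain ⟨Ts, ⟨hq, hblocks⟩, hend⟩ :=
      ih q.length (by simp [← hlen, List.length_pos_iff.2 hT.ne_nil])
        (hd.of_innerBlock_append hT) (Nat.Odd.sub_even hTN hN hT.even_sum) rfl
    refine ⟨T :: Ts, ⟨by simp [hq], ?_⟩,
      b3AtEnd_cons_iff.2 (Or.inr ⟨hT.not_isB3, hend⟩)⟩
    simp only [List.mem_cons, forall_eq_or_imp]
    exact ⟨isBlock_iff.2 (Or.inl hT), hblocks⟩

end existence

/-- every type B partition of `2n+1` admits a unique decomposition into
consecutive blocks of types B1, B1*, B2, B3, with the (unique) B3 block at the end. -/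
theorem stmt8 (n : ℕ) (d : List ℕ) (hd : IsTypeBList d (2 * n + 1)) :
    ∃! Ts : List (List ℕ), IsBlockDecomp d Ts ∧ B3AtEnd Ts := by
  obtain ⟨Ts, hTs, hend⟩ := hd.exists_blockDecomp (odd_two_mul_add_one n)
  exact ⟨Ts, ⟨hTs, hend⟩, fun Ts' ⟨hTs', hend'⟩ =>
    eq_of_isBlockDecomp_of_b3AtEnd hTs' hend' hTs hend⟩
end

section
/- Let d_C = [d_1, ..., d_r] be a type C partition of 2n with transpose [s_1, s_2, ...] and r_i = #{j : d_j = i}. Define η_{2i} = min{j : d_1 + ... + d_j ≥ 2i} for 1 ≤ i ≤ n. Then Σ_{i=1}^n η_{2i} = (1/4)Σ_j s_j(s_j + 1) + (1/4)Σ_{i odd} r_i. -/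
/-- `η_m = min {j : d_1 + ... + d_j ≥ m}`. -/
noncomputable def eta (d : ℕ → ℕ) (m : ℕ) : ℕ :=
  sInf {j | m ≤ ∑ l ∈ Finset.range j, d l}

/-!
Write `S j = d 0 + ⋯ + d (j - 1)`. Since `η_{2i}` counts the `j` with `S j < 2i`, one gets
`Σ_i η_{2i} = Σ_j (n - S j / 2) = ½ Σ_j (2n - S j) + ½ #{j | S j odd}`. The first sum is
`Σ_l (l + 1) d l`, which is also `½ Σ_j s_j (s_j + 1)` (count the cells of the Young diagram
by columns). For the second, the type C condition forces `d l` to be odd whenever `S l` is, so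
`S l % 2 + S (l + 1) % 2 = d l % 2` for every `l`; summing over `l` gives
`2 #{j | S j odd} = #{l | d l odd} = Σ_{i odd} r_i`.
-/

open Finset

lemma Finset.eq_range_card_of_isLowerSet {s : Finset ℕ} (hs : IsLowerSet (s : Set ℕ)) :
    s = range #s := by
  obtain h | ⟨a, ha⟩ := hs.eq_univ_or_Iio
  · exact absurd (h ▸ s.finite_toSet) Set.infinite_univ
  · have hsa : s = range a := by rw [← coe_inj, coe_range, ha]
    rw [hsa, card_range]

lemma card_filter_odd_eq_sum_mod_two {ι : Type*} (s : Finset ι) (f : ι → ℕ) :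
    #{x ∈ s | Odd (f x)} = ∑ x ∈ s, f x % 2 := by
  rw [card_filter]
  refine sum_congr rfl fun x _ => ?_
  split_ifs with h
  · exact (Nat.odd_iff.mp h).symm
  · exact (Nat.even_iff.mp (Nat.not_odd_iff_even.mp h)).symm

section Partition

variable {d : ℕ → ℕ} {m N : ℕ}

lemma le_of_sum_range_eq (hm : ∀ l, m ≤ l → d l = 0) (hsum : ∑ l ∈ range m, d l = N) (l : ℕ) :
    d l ≤ N := by
  by_cases hl : l < m
  · exact hsum ▸ single_le_sum (fun _ _ => Nat.zero_le _) (mem_range.mpr hl)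
  · simp [hm l (not_lt.mp hl)]

lemma sum_range_le_of_sum_range_eq (hsum : ∑ l ∈ range m, d l = N) {j : ℕ} (hj : j ≤ m) :
    ∑ l ∈ range j, d l ≤ N :=
  hsum ▸ sum_le_sum_of_subset (range_subset_range.mpr hj)

lemma ncard_setOf_eq_card_filter (hm : ∀ l, m ≤ l → d l = 0) {P : ℕ → Prop} [DecidablePred P]
    (hP : ¬ P 0) : {l | P (d l)}.ncard = #{l ∈ range m | P (d l)} := by
  rw [← Set.ncard_coe_finset, coe_filter]
  congr 1
  ext l
  simp only [Set.mem_ofPred_eq, mem_range]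
  refine ⟨fun h => ⟨?_, h⟩, And.right⟩
  by_contra hl
  exact hP (hm l (not_lt.mp hl) ▸ h)

lemma eta_eq_card_filter {k : ℕ} (hk : k ≤ ∑ l ∈ range m, d l) :
    eta d k = #{j ∈ range m | ∑ l ∈ range j, d l < k} := by
  have hmono : Monotone fun j => ∑ l ∈ range j, d l := fun a b hab =>
    sum_le_sum_of_subset (range_subset_range.mpr hab)
  have hne : {j | k ≤ ∑ l ∈ range j, d l}.Nonempty := ⟨m, hk⟩
  have hle : eta d k ≤ m := Nat.sInf_le hk
  suffices h : {j ∈ range m | ∑ l ∈ range j, d l < k} = range (eta d k) by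
    rw [h, card_range]
  ext j
  simp only [mem_filter, mem_range]
  constructor
  · rintro ⟨-, hj⟩
    by_contra! hej
    exact (Nat.sInf_mem hne).not_gt (lt_of_le_of_lt (hmono hej) hj)
  · intro hj
    have hnot : j ∉ {j | k ≤ ∑ l ∈ range j, d l} := Nat.notMem_of_lt_sInf hj
    exact ⟨hj.trans_le hle, not_le.mp hnot⟩

lemma sum_eta_two_mul (n : ℕ) (hsum : ∑ l ∈ range m, d l = 2 * n) :
    ∑ i ∈ Icc 1 n, eta d (2 * i) = ∑ j ∈ range m, (n - (∑ l ∈ range j, d l) / 2) := by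
  rw [sum_congr rfl fun i hi => eta_eq_card_filter (by rw [hsum]; rw [mem_Icc] at hi; omega),
    sum_congr rfl fun _ _ => card_filter _ _, sum_comm]
  refine sum_congr rfl fun j hj => ?_
  rw [← card_filter]
  have hS := sum_range_le_of_sum_range_eq hsum (mem_range.mp hj).le
  have hfilter : {i ∈ Icc 1 n | ∑ l ∈ range j, d l < 2 * i} =
      Ioc ((∑ l ∈ range j, d l) / 2) n := by
    ext i
    simp only [mem_filter, mem_Icc, mem_Ioc]
    omega
  rw [hfilter, Nat.card_Ioc]

lemma sum_sub_sum_range (hsum : ∑ l ∈ range m, d l = N) :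
    ∑ j ∈ range m, (N - ∑ l ∈ range j, d l) = ∑ l ∈ range m, (l + 1) * d l := by
  have htail : ∀ j ∈ range m, N - ∑ l ∈ range j, d l = ∑ l ∈ Ico j m, d l := fun j hj => by
    rw [← hsum, ← sum_range_add_sum_Ico _ (mem_range.mp hj).le, Nat.add_sub_cancel_left]
  rw [sum_congr rfl htail, range_eq_Ico, sum_Ico_Ico_comm]
  simp

lemma filter_lt_eq_range_ptranspose (hanti : Antitone d) (hm : ∀ l, m ≤ l → d l = 0) (j : ℕ) :
    {l ∈ range m | j < d l} = range (ptranspose d j) := by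
  have hcard : ptranspose d j = #{l ∈ range m | j < d l} :=
    ncard_setOf_eq_card_filter hm (P := fun x => j + 1 ≤ x) (by omega)
  rw [hcard]
  refine eq_range_card_of_isLowerSet fun a b hba ha => ?_
  simp only [coe_filter, mem_range, Set.mem_ofPred_eq] at ha ⊢
  exact ⟨hba.trans_lt ha.1, ha.2.trans_le (hanti hba)⟩

lemma sum_ptranspose_mul_succ (hanti : Antitone d) (hm : ∀ l, m ≤ l → d l = 0)
    (hN : ∀ l, d l ≤ N) :
    ∑ j ∈ range N, ptranspose d j * (ptranspose d j + 1) =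
      2 * ∑ l ∈ range m, (l + 1) * d l := by
  have hgauss : ∀ s, s * (s + 1) = 2 * ∑ l ∈ range s, (l + 1) := fun s => by
    have h := sum_range_id_mul_two (s + 1)
    rw [sum_range_succ', add_zero, Nat.add_sub_cancel] at h
    linarith
  simp_rw [hgauss, ← filter_lt_eq_range_ptranspose hanti hm, ← mul_sum, sum_filter]
  rw [sum_comm]
  congr 1
  refine sum_congr rfl fun l _ => ?_
  rw [← sum_filter, sum_const, smul_eq_mul, mul_comm]
  congr 1
  have hfilter : {j ∈ range N | j < d l} = range (d l) := by
    ext j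
    simp only [mem_filter, mem_range]
    have := hN l
    omega
  rw [hfilter, card_range]

lemma sum_partMult_odd (hm : ∀ l, m ≤ l → d l = 0) (t : Finset ℕ) (ht : ∀ l < m, d l ∈ t) :
    ∑ i ∈ t with Odd i, partMult d i = #{l ∈ range m | Odd (d l)} := by
  rw [card_eq_sum_card_fiberwise (f := d) (t := {i ∈ t | Odd i})]
  · refine sum_congr rfl fun i hi => ?_
    have hi := (mem_filter.mp hi).2
    rw [partMult, ncard_setOf_eq_card_filter hm (P := (· = i)) (by rintro rfl; simp at hi),
      filter_filter]
    congr 1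
    ext l
    simp only [mem_filter]
    exact ⟨fun h => ⟨h.1, h.2 ▸ hi, h.2⟩, fun h => ⟨h.1, h.2.2⟩⟩
  · intro l hl
    simp only [coe_filter, mem_range, Set.mem_ofPred_eq] at hl
    exact mem_filter.mpr ⟨ht l hl.1, hl.2⟩

/-- Odd parts equal to a value `i` form a block of consecutive indices; if `d j` is even, each
such block lies entirely before `j` or entirely after it, and has even length. -/
lemma even_sum_range_of_even (hanti : Antitone d)
    (hC : ∀ i, 0 < i → Odd i → Even (partMult d i)) {j : ℕ} (hj : Even (d j)) :
    Even (∑ l ∈ range j, d l) := by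
  rw [even_sum_iff_even_card_odd, card_eq_sum_card_image d]
  refine even_sum _ fun i hi => ?_
  obtain ⟨x, hx, rfl⟩ := mem_image.mp hi
  simp only [mem_filter, mem_range] at hx
  have hodd := hx.2
  suffices h : #{l ∈ range j | Odd (d l) ∧ d l = d x} = partMult d (d x) by
    rw [filter_filter, h]
    exact hC (d x) hodd.pos hodd
  rw [partMult, ← Set.ncard_coe_finset]
  congr 1
  ext l
  simp only [coe_filter, mem_range, Set.mem_ofPred_eq]
  refine ⟨fun h => h.2.2, fun h => ⟨?_, h ▸ hodd, h⟩⟩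
  by_contra! hjl
  have hdj : d j = d x := le_antisymm (hanti hx.1.le) (h ▸ hanti hjl)
  exact Nat.not_even_iff_odd.mpr hodd (hdj ▸ hj)

lemma sum_range_mod_two_add_succ (hanti : Antitone d)
    (hC : ∀ i, 0 < i → Odd i → Even (partMult d i)) (l : ℕ) :
    (∑ i ∈ range l, d i) % 2 + (∑ i ∈ range (l + 1), d i) % 2 = d l % 2 := by
  have h := even_sum_range_of_even hanti hC (j := l)
  rw [Nat.even_iff, Nat.even_iff] at h
  rw [sum_range_succ]
  omega

lemma two_mul_sum_sum_range_mod_two (hanti : Antitone d)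
    (hC : ∀ i, 0 < i → Odd i → Even (partMult d i)) (hm : Even (∑ l ∈ range m, d l)) :
    2 * ∑ j ∈ range m, (∑ l ∈ range j, d l) % 2 = ∑ l ∈ range m, d l % 2 := by
  rw [← sum_congr rfl fun l _ => sum_range_mod_two_add_succ hanti hC l, sum_add_distrib]
  have hshift := sum_range_succ' (fun j => (∑ l ∈ range j, d l) % 2) m
  rw [sum_range_succ, Nat.even_iff.mp hm] at hshift
  simp only [sum_range_zero, Nat.zero_mod, add_zero] at hshift
  omega

end Partition

/-- for a type C partition `d` of `2n` with transpose `[s₁, s₂, ...]` and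
`r_i = #{j : d_j = i}`, one has
`Σ_{i=1}^n η_{2i} = (1/4) Σ_j s_j (s_j + 1) + (1/4) Σ_{i odd} r_i`. -/
theorem stmt12 (n : ℕ) (d : ℕ → ℕ) (hd : IsTypeC d (2 * n)) :
    (∑ i ∈ Finset.Icc 1 n, (eta d (2 * i) : ℚ))
      = (1 / 4) * ∑ j ∈ Finset.range (2 * n),
            ((ptranspose d j : ℚ) * ((ptranspose d j : ℚ) + 1))
        + (1 / 4) * ∑ i ∈ (Finset.range (2 * n + 1)).filter (fun i => Odd i),
            (partMult d i : ℚ) := by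
  obtain ⟨⟨hanti, m, hm, hsum⟩, hC⟩ := hd
  have hle := le_of_sum_range_eq hm hsum
  have key : 4 * ∑ i ∈ Icc 1 n, eta d (2 * i) =
      ∑ j ∈ range (2 * n), ptranspose d j * (ptranspose d j + 1) +
        ∑ i ∈ range (2 * n + 1) with Odd i, partMult d i := by
    rw [sum_ptranspose_mul_succ hanti hm hle,
      sum_partMult_odd hm _ fun l _ => mem_range.mpr (Nat.lt_succ_of_le (hle l)),
      card_filter_odd_eq_sum_mod_two,
      ← two_mul_sum_sum_range_mod_two hanti hC (hsum ▸ even_two_mul n),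
      ← sum_sub_sum_range hsum, sum_eta_two_mul n hsum, mul_sum, mul_sum, mul_sum,
      ← sum_add_distrib]
    refine sum_congr rfl fun j hj => ?_
    have := sum_range_le_of_sum_range_eq hsum (mem_range.mp hj).le
    omega
  have hq := congrArg (Nat.cast : ℕ → ℚ) key
  push_cast at hq
  linarith
end

section
/- For a special type C partition d_C of 2n defining a nilpotent orbit O_C in sp_{2n}, with η_{2i} = min{j : d_1 + ... + d_j ≥ 2i}, the following dimension identity holds for every integer g: (2n² + n)g − n² − Σ_{i=1}^n η_{2i} = (2n² + n)(g − 1) + (1/2) dim O_C; equivalently, Σ_{i=1}^n η_{2i} = n² + n − (1/2) dim O_C. -/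
open Finset

lemma aux_ncard_eq (p : ℕ → Prop) [DecidablePred p] (M : ℕ) (h : ∀ l, p l → l < M) :
    Set.ncard {l | p l} = ((Finset.range M).filter p).card := by
  have hset : {l | p l} = ↑((Finset.range M).filter p) := by
    ext l
    simp only [Set.mem_setOf_eq, coe_filter, Finset.mem_range]
    exact ⟨fun hp => ⟨h l hp, hp⟩, fun hp => hp.2⟩
  rw [hset, Set.ncard_coe_finset]

lemma aux_sum_max (d : ℕ → ℕ) (M : ℕ) :
    ∑ j ∈ Finset.range M, ∑ k ∈ Finset.range M, d (max j k)
      = ∑ t ∈ Finset.range M, (2 * t + 1) * d t := by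
  induction M with
  | zero => simp
  | succ M ih =>
    rw [Finset.sum_range_succ, Finset.sum_range_succ (fun t => (2 * t + 1) * d t)]
    have h1 : ∀ j ∈ Finset.range M, ∑ k ∈ Finset.range (M + 1), d (max j k)
        = (∑ k ∈ Finset.range M, d (max j k)) + d M := by
      intro j hj
      rw [Finset.sum_range_succ, max_eq_right (le_of_lt (Finset.mem_range.mp hj))]
    have h2 : ∑ k ∈ Finset.range (M + 1), d (max M k) = (M + 1) * d M := by
      rw [Finset.sum_congr rfl (fun k hk => ?_), Finset.sum_const, card_range, smul_eq_mul]
      rw [max_eq_left (Nat.lt_succ_iff.mp (Finset.mem_range.mp hk))]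
    rw [Finset.sum_congr rfl h1, Finset.sum_add_distrib, ih, Finset.sum_const, card_range,
      smul_eq_mul, h2]
    ring

lemma aux_sum_D (d : ℕ → ℕ) (M : ℕ) :
    (∑ j ∈ Finset.range M, ∑ l ∈ Finset.range j, d l)
      + ∑ l ∈ Finset.range M, (l + 1) * d l = M * ∑ l ∈ Finset.range M, d l := by
  induction M with
  | zero => simp
  | succ M ih =>
    rw [Finset.sum_range_succ, Finset.sum_range_succ (fun l => (l + 1) * d l),
      Finset.sum_range_succ d]
    have hr : (M + 1) * ((∑ l ∈ Finset.range M, d l) + d M)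
        = (M * ∑ l ∈ Finset.range M, d l) + (∑ l ∈ Finset.range M, d l)
          + (M + 1) * d M := by ring
    rw [hr, ← ih]
    ring

/-- for a special type C partition `d` of `2n` defining the orbit `O_C`
with `dim O_C = 2n² + n − (1/2) Σ_i s_i² − (1/2) #{j : d_j odd}`, and for every `g`:
`(2n² + n)·g − n² − Σ_{i=1}^n η_{2i} = (2n² + n)(g − 1) + (1/2) dim O_C`,
equivalently `Σ_{i=1}^n η_{2i} = n² + n − (1/2) dim O_C`. -/
theorem stmt13 (n : ℕ) (d : ℕ → ℕ) (hd : IsSpecialC d (2 * n)) (g : ℤ) :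
    (2 * n ^ 2 + n : ℚ) * (g : ℚ) - n ^ 2 - ∑ i ∈ Finset.Icc 1 n, (eta d (2 * i) : ℚ)
      = (2 * n ^ 2 + n : ℚ) * ((g : ℚ) - 1)
        + (1 / 2) * ((2 * n ^ 2 + n : ℚ)
            - (1 / 2) * ∑ i ∈ Finset.range (2 * n), ((ptranspose d i : ℚ)) ^ 2
            - (1 / 2) * (Set.ncard {j | Odd (d j)} : ℚ)) := by
  classical
  obtain ⟨⟨⟨ha, m₀, hm₀, hsum₀⟩, hC⟩, -⟩ := hd
  -- a minimal bound for the support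
  have hex : ∃ l, d l = 0 := ⟨m₀, hm₀ m₀ le_rfl⟩
  set m := Nat.find hex with hmdef
  have hm_zero : ∀ l, m ≤ l → d l = 0 := fun l hl =>
    Nat.le_zero.mp ((Nat.find_spec hex) ▸ ha hl)
  have hm_pos : ∀ l, l < m → 0 < d l := fun l hl =>
    Nat.pos_of_ne_zero (Nat.find_min hex hl)
  have hmle : m ≤ m₀ := Nat.find_le (hm₀ m₀ le_rfl)
  have hsum : ∑ l ∈ Finset.range m, d l = 2 * n := by
    rw [← hsum₀]
    exact Finset.sum_subset (Finset.range_subset_range.mpr hmle)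
      (fun x _ hx => hm_zero x (le_of_not_gt (fun h => hx (Finset.mem_range.mpr h))))
  set D : ℕ → ℕ := fun j => ∑ l ∈ Finset.range j, d l with hDdef
  have hDsucc : ∀ j, D (j + 1) = D j + d j := fun j => Finset.sum_range_succ d j
  have hDmono : Monotone D := fun a b hab =>
    Finset.sum_le_sum_of_subset (Finset.range_subset_range.mpr hab)
  have hDm : ∀ j, m ≤ j → D j = 2 * n := by
    intro j hj
    rw [show D j = ∑ l ∈ Finset.range j, d l from rfl, ← hsum]
    exact (Finset.sum_subset (Finset.range_subset_range.mpr hj)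
      (fun x _ hx => hm_zero x (le_of_not_gt (fun h => hx (Finset.mem_range.mpr h))))).symm
  have hDle : ∀ j, D j ≤ 2 * n := by
    intro j
    rcases le_or_gt m j with h | h
    · exact (hDm j h).le
    · rw [← hDm m le_rfl]; exact hDmono h.le
  have hdle : ∀ j, d j ≤ 2 * n := by
    intro j
    rcases le_or_gt m j with h | h
    · rw [hm_zero j h]; exact Nat.zero_le _
    · calc d j ≤ D (j + 1) := by rw [hDsucc]; omega
        _ ≤ 2 * n := hDle _
  -- KEY LEMMA: if a partial sum is odd then the next part is odd
  have KL : ∀ j, Odd (D j) → Odd (d j) := by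
    intro j hodd
    have hsplit : D j = (∑ l ∈ (Finset.range j).filter (fun l => d j < d l), d l)
        + ∑ l ∈ (Finset.range j).filter (fun l => ¬ d j < d l), d l :=
      (Finset.sum_filter_add_sum_filter_not _ _ _).symm
    have h2 : ∑ l ∈ (Finset.range j).filter (fun l => ¬ d j < d l), d l
        = ((Finset.range j).filter (fun l => ¬ d j < d l)).card * d j := by
      apply Finset.sum_const_nat
      intro l hl
      rcases Finset.mem_filter.mp hl with ⟨hlr, hld⟩
      have := ha (le_of_lt (Finset.mem_range.mp hlr))
      omega
    have heven : Even (∑ l ∈ (Finset.range j).filter (fun l => d j < d l), d l) := by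
      rw [← Finset.sum_fiberwise_of_maps_to
        (t := Finset.Ioc (d j) (2 * n)) (g := d)
        (fun l hl => Finset.mem_Ioc.mpr ⟨(Finset.mem_filter.mp hl).2, hdle l⟩) d]
      apply Finset.sum_induction _ Even (fun a b => Even.add) Even.zero
      intro u hu
      rcases Finset.mem_Ioc.mp hu with ⟨hu1, hu2⟩
      have hfil : ((Finset.range j).filter (fun l => d j < d l)).filter (fun l => d l = u)
          = (Finset.range j).filter (fun l => d l = u) := by
        rw [Finset.filter_filter]
        apply Finset.filter_congr
        intro l hl
        constructor
        · exact fun h => h.2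
        · exact fun h => ⟨h ▸ hu1, h⟩
      have hcard : ((Finset.range j).filter (fun l => d l = u)).card = partMult d u := by
        rw [partMult, aux_ncard_eq (fun l => d l = u) j ?_]
        intro l hl
        by_contra hcon
        have := ha (le_of_not_gt hcon)
        omega
      have hcsum : ∑ l ∈ ((Finset.range j).filter (fun l => d j < d l)).filter
          (fun l => d l = u), d l
          = partMult d u * u := by
        rw [hfil, ← hcard]
        exact Finset.sum_const_nat (fun l hl => (Finset.mem_filter.mp hl).2)
      rw [hcsum]
      rcases Nat.even_or_odd u with hue | huo
      · exact hue.mul_left _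
      · exact (hC u (by omega) huo).mul_right _
    rw [hsplit, h2] at hodd
    rcases heven with ⟨c, hc⟩
    have hp : (((Finset.range j).filter (fun l => ¬ d j < d l)).card * d j) % 2 = 1 := by
      rw [Nat.odd_iff] at hodd
      omega
    exact (Nat.odd_mul.mp (Nat.odd_iff.mpr hp)).2
  -- the count of odd parts
  have hR : (Set.ncard {j | Odd (d j)}) = ∑ j ∈ Finset.range m, d j % 2 := by
    rw [aux_ncard_eq (fun j => Odd (d j)) m ?_, Finset.card_filter]
    · apply Finset.sum_congr rfl
      intro j hj
      rcases Nat.even_or_odd (d j) with h | h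
      · rw [if_neg (by simpa [Nat.not_odd_iff_even] using h), Nat.even_iff.mp h]
      · rw [if_pos h, Nat.odd_iff.mp h]
    · intro l hl
      by_contra hcon
      rw [hm_zero l (le_of_not_gt hcon)] at hl
      simp [Nat.odd_iff] at hl
  -- parity bookkeeping
  have hP : ∀ j, d j % 2 = D j % 2 + D (j + 1) % 2 := by
    intro j
    have hs := hDsucc j
    rcases Nat.even_or_odd (D j) with h | h
    · rw [Nat.even_iff] at h
      omega
    · have h2 := KL j h
      rw [Nat.odd_iff] at h h2
      omega
  have hO0 : D 0 = 0 := rfl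
  have hOm : D m % 2 = 0 := by rw [hDm m le_rfl]; omega
  have hRO : ∑ j ∈ Finset.range m, d j % 2 = 2 * ∑ j ∈ Finset.range m, D j % 2 := by
    have h1 : ∑ j ∈ Finset.range m, d j % 2
        = (∑ j ∈ Finset.range m, D j % 2) + ∑ j ∈ Finset.range m, D (j + 1) % 2 := by
      rw [← Finset.sum_add_distrib]
      exact Finset.sum_congr rfl (fun j _ => hP j)
    have h2 : ∑ j ∈ Finset.range (m + 1), D j % 2
        = (∑ j ∈ Finset.range m, D (j + 1) % 2) + D 0 % 2 :=
      Finset.sum_range_succ' (fun j => D j % 2) m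
    have h3 : ∑ j ∈ Finset.range (m + 1), D j % 2
        = (∑ j ∈ Finset.range m, D j % 2) + D m % 2 :=
      Finset.sum_range_succ (fun j => D j % 2) m
    rw [hO0] at h2
    omega
  -- the eta sums
  have hetaEq : ∀ i ∈ Finset.Icc 1 n, eta d (2 * i)
      = ((Finset.range m).filter (fun j => D j < 2 * i)).card := by
    intro i hi
    rcases Finset.mem_Icc.mp hi with ⟨hi1, hi2⟩
    have hmem : m ∈ {j | 2 * i ≤ D j} := by
      simp only [Set.mem_setOf_eq]
      rw [hDm m le_rfl]
      omega
    have hne : {j | 2 * i ≤ D j}.Nonempty := ⟨m, hmem⟩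
    have hη : 2 * i ≤ D (eta d (2 * i)) := Nat.sInf_mem hne
    have hle : eta d (2 * i) ≤ m := Nat.sInf_le hmem
    have hiff : ∀ j, 2 * i ≤ D j ↔ eta d (2 * i) ≤ j := by
      intro j
      exact ⟨fun h => Nat.sInf_le h, fun h => le_trans hη (hDmono h)⟩
    have hfil : (Finset.range m).filter (fun j => D j < 2 * i)
        = Finset.range (eta d (2 * i)) := by
      ext j
      simp only [Finset.mem_filter, Finset.mem_range]
      constructor
      · intro ⟨hjm, hjD⟩
        by_contra hcon
        exact absurd ((hiff j).mpr (le_of_not_gt hcon)) (by omega)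
      · intro hj
        have : ¬ (2 * i ≤ D j) := fun h => absurd ((hiff j).mp h) (by omega)
        exact ⟨lt_of_lt_of_le hj hle, by omega⟩
    rw [hfil, Finset.card_range]
  have hEtaSum : (∑ i ∈ Finset.Icc 1 n, eta d (2 * i))
      + ∑ j ∈ Finset.range m, D j / 2 = m * n := by
    have h1 : ∑ i ∈ Finset.Icc 1 n, eta d (2 * i)
        = ∑ j ∈ Finset.range m, ((Finset.Icc 1 n).filter (fun i => D j < 2 * i)).card := by
      rw [Finset.sum_congr rfl hetaEq]
      simp only [Finset.card_filter]
      rw [Finset.sum_comm]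
    have h2 : ∀ j ∈ Finset.range m, ((Finset.Icc 1 n).filter (fun i => D j < 2 * i)).card
        = n - D j / 2 := by
      intro j _
      have hdiv : D j / 2 ≤ n := by
        have := hDle j
        omega
      have : (Finset.Icc 1 n).filter (fun i => D j < 2 * i)
          = Finset.Icc (D j / 2 + 1) n := by
        ext i
        simp only [Finset.mem_filter, Finset.mem_Icc]
        omega
      rw [this, Nat.card_Icc]
      omega
    rw [h1, Finset.sum_congr rfl h2, ← Finset.sum_add_distrib]
    have h3 : ∀ j ∈ Finset.range m, (n - D j / 2) + D j / 2 = n := by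
      intro j _
      have := hDle j
      omega
    rw [Finset.sum_congr rfl h3, Finset.sum_const, Finset.card_range, smul_eq_mul]
  -- the transpose sum of squares
  have hmin : ∀ j k, min (d j) (d k) = d (max j k) := by
    intro j k
    rcases le_total j k with h | h
    · rw [max_eq_right h, min_eq_right (ha h)]
    · rw [max_eq_left h, min_eq_left (ha h)]
  have hs_i : ∀ i, ptranspose d i = ((Finset.range m).filter (fun j => i + 1 ≤ d j)).card := by
    intro i
    rw [ptranspose, aux_ncard_eq (fun j => i + 1 ≤ d j) m ?_]
    intro l hl
    by_contra hcon
    rw [hm_zero l (le_of_not_gt hcon)] at hl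
    omega
  have hS : ∑ i ∈ Finset.range (2 * n), (ptranspose d i) ^ 2
      = ∑ t ∈ Finset.range m, (2 * t + 1) * d t := by
    rw [← aux_sum_max d m]
    have h1 : ∀ i, (ptranspose d i) ^ 2
        = ∑ j ∈ Finset.range m, ∑ k ∈ Finset.range m,
            (if i + 1 ≤ d (max j k) then 1 else 0) := by
      intro i
      rw [hs_i i, Finset.card_filter, sq, Finset.sum_mul_sum]
      apply Finset.sum_congr rfl
      intro j _
      apply Finset.sum_congr rfl
      intro k _
      have hm1 : i + 1 ≤ d (max j k) ↔ (i + 1 ≤ d j ∧ i + 1 ≤ d k) := by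
        rw [← hmin j k, le_min_iff]
      by_cases hj : i + 1 ≤ d j <;> by_cases hk : i + 1 ≤ d k <;>
        simp [hj, hk, hm1]
    rw [Finset.sum_congr rfl (fun i _ => h1 i), Finset.sum_comm]
    apply Finset.sum_congr rfl
    intro j _
    rw [Finset.sum_comm]
    apply Finset.sum_congr rfl
    intro k _
    rw [← Finset.card_filter]
    have hfil : (Finset.range (2 * n)).filter (fun i => i + 1 ≤ d (max j k))
        = Finset.range (d (max j k)) := by
      ext i
      have := hdle (max j k)
      simp only [Finset.mem_filter, Finset.mem_range]
      omega
    rw [hfil, Finset.card_range]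
  -- assemble the key natural-number identity
  have hT : (∑ j ∈ Finset.range m, D j) + ∑ l ∈ Finset.range m, (l + 1) * d l
      = m * (2 * n) := by
    rw [← hsum]
    exact aux_sum_D d m
  have hDiv : 2 * (∑ j ∈ Finset.range m, D j / 2) + (∑ j ∈ Finset.range m, D j % 2)
      = ∑ j ∈ Finset.range m, D j := by
    rw [Finset.mul_sum, ← Finset.sum_add_distrib]
    exact Finset.sum_congr rfl (fun j _ => Nat.div_add_mod (D j) 2)
  have hSd : (∑ t ∈ Finset.range m, (2 * t + 1) * d t) + ∑ t ∈ Finset.range m, d t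
      = 2 * ∑ l ∈ Finset.range m, (l + 1) * d l := by
    rw [Finset.mul_sum, ← Finset.sum_add_distrib]
    exact Finset.sum_congr rfl (fun t _ => by ring)
  have hMN : 2 * ((∑ i ∈ Finset.Icc 1 n, eta d (2 * i)) + ∑ j ∈ Finset.range m, D j / 2)
      = (∑ j ∈ Finset.range m, D j) + ∑ l ∈ Finset.range m, (l + 1) * d l := by
    rw [hEtaSum, hT]
    ring
  have key : 4 * (∑ i ∈ Finset.Icc 1 n, eta d (2 * i))
      = 2 * n + (∑ i ∈ Finset.range (2 * n), (ptranspose d i) ^ 2)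
        + Set.ncard {j | Odd (d j)} := by
    rw [hS, hR, hRO]
    rw [hsum] at hSd
    omega
  -- conclude over ℚ
  have keyQ : (4 : ℚ) * ((∑ i ∈ Finset.Icc 1 n, eta d (2 * i) : ℕ) : ℚ)
      = 2 * n + ((∑ i ∈ Finset.range (2 * n), (ptranspose d i) ^ 2 : ℕ) : ℚ)
        + (Set.ncard {j | Odd (d j)} : ℚ) := by
    exact_mod_cast congrArg (fun x : ℕ => (x : ℚ)) key
  push_cast at keyQ
  linarith [keyQ]
end
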